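/- arXiv:math/0111081 — 5 statements merged into one kernel-verified Lean document; each statement's English description precedes it below -/
import Mathlib

section
/- The group Γ(2) ⊂ PSL(2,ℤ) is freely generated by A₁ = T² and A₂ = QT²Q, where Q = (0 1; −1 0) and T = (1 1; 0 1). -/
open UpperHalfPlane


/-- `SL(2, ℤ)`. -/
abbrev SL2Z := Matrix.SpecialLinearGroup (Fin 2) ℤ

/-- `PSL(2, ℤ) = SL(2, ℤ)/{±I}`. -/
abbrev PSL2Z := SL2Z ⧸ Subgroup.center SL2Z

/-- The projection `SL(2, ℤ) → PSL(2, ℤ)`. -/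
noncomputable def pr : SL2Z →* PSL2Z := QuotientGroup.mk' (Subgroup.center SL2Z)

/-- The matrix `Q = (0 1; -1 0)` in `SL(2, ℤ)`. -/
def Qm : SL2Z := ⟨!![0, 1; -1, 0], by norm_num [Matrix.det_fin_two_of]⟩

/-- The matrix `T = (1 1; 0 1)` in `SL(2, ℤ)`. -/
def Tm : SL2Z := ⟨!![1, 1; 0, 1], by norm_num [Matrix.det_fin_two_of]⟩

/-- `Γ(2)` as a subgroup of `PSL(2, ℤ)`. -/
noncomputable def Gamma2PSL : Subgroup PSL2Z :=
  (CongruenceSubgroup.Gamma 2).map pr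

/-! ### Auxiliary matrices -/

def T2 : SL2Z := ⟨!![1, 2; 0, 1], by norm_num [Matrix.det_fin_two_of]⟩
def T2i : SL2Z := ⟨!![1, -2; 0, 1], by norm_num [Matrix.det_fin_two_of]⟩
def Bm : SL2Z := ⟨!![1, 0; -2, 1], by norm_num [Matrix.det_fin_two_of]⟩
def Bmi : SL2Z := ⟨!![1, 0; 2, 1], by norm_num [Matrix.det_fin_two_of]⟩
def T2z (n : ℤ) : SL2Z := ⟨!![1, 2*n; 0, 1], by norm_num [Matrix.det_fin_two_of]⟩
def Bz (n : ℤ) : SL2Z := ⟨!![1, 0; 2*n, 1], by norm_num [Matrix.det_fin_two_of]⟩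

lemma Tm_sq : Tm ^ 2 = T2 := by
  ext i j
  simp only [Matrix.SpecialLinearGroup.coe_pow]
  fin_cases i <;> fin_cases j <;>
    simp [Tm, T2, pow_two, Matrix.mul_apply, Fin.sum_univ_two]

lemma QTQ : Qm * Tm ^ 2 * Qm = -Bm := by
  ext i j
  simp only [Matrix.SpecialLinearGroup.coe_mul, Matrix.SpecialLinearGroup.coe_pow, Matrix.SpecialLinearGroup.coe_neg]
  fin_cases i <;> fin_cases j <;>
    simp [Tm, Qm, Bm, pow_two, Matrix.mul_apply, Fin.sum_univ_two]

lemma T2_inv : T2⁻¹ = T2i := by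
  apply inv_eq_of_mul_eq_one_right
  ext i j
  simp only [Matrix.SpecialLinearGroup.coe_mul]
  fin_cases i <;> fin_cases j <;>
    simp [T2, T2i, Matrix.mul_apply, Fin.sum_univ_two]

lemma Bm_inv : Bm⁻¹ = Bmi := by
  apply inv_eq_of_mul_eq_one_right
  ext i j
  simp only [Matrix.SpecialLinearGroup.coe_mul]
  fin_cases i <;> fin_cases j <;>
    simp [Bm, Bmi, Matrix.mul_apply, Fin.sum_univ_two]

lemma SL_mul_apply (g h : SL2Z) (i j : Fin 2) :
    (g * h) i j = g i 0 * h 0 j + g i 1 * h 1 j := by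
  show ((g * h : SL2Z) : Matrix (Fin 2) (Fin 2) ℤ) i j = _
  rw [Matrix.SpecialLinearGroup.coe_mul, Matrix.mul_apply, Fin.sum_univ_two]

lemma T2_zpow (n : ℤ) : T2 ^ n = T2z n := by
  induction n using Int.induction_on with
  | zero =>
    ext i j
    fin_cases i <;> fin_cases j <;> simp [T2z]
  | succ k ih =>
    rw [zpow_add_one, ih]
    ext i j
    simp only [Matrix.SpecialLinearGroup.coe_mul]
    fin_cases i <;> fin_cases j <;>
      (simp [T2z, T2, Matrix.mul_apply, Fin.sum_univ_two]; try push_cast) <;> try ring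
  | pred k ih =>
    rw [zpow_sub_one, ih, T2_inv]
    ext i j
    simp only [Matrix.SpecialLinearGroup.coe_mul]
    fin_cases i <;> fin_cases j <;>
      (simp [T2z, T2i, Matrix.mul_apply, Fin.sum_univ_two]; try push_cast) <;> try ring

lemma Bmi_zpow (n : ℤ) : Bmi ^ n = Bz n := by
  induction n using Int.induction_on with
  | zero =>
    ext i j
    fin_cases i <;> fin_cases j <;> simp [Bz]
  | succ k ih =>
    rw [zpow_add_one, ih]
    ext i j
    simp only [Matrix.SpecialLinearGroup.coe_mul]
    fin_cases i <;> fin_cases j <;>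
      (simp [Bz, Bmi, Matrix.mul_apply, Fin.sum_univ_two]; try push_cast) <;> try ring
  | pred k ih =>
    have hBi : Bmi⁻¹ = Bm := by rw [← Bm_inv, inv_inv]
    rw [zpow_sub_one, ih, hBi]
    ext i j
    simp only [Matrix.SpecialLinearGroup.coe_mul]
    fin_cases i <;> fin_cases j <;>
      (simp [Bz, Bm, Matrix.mul_apply, Fin.sum_univ_two]; try push_cast) <;> try ring

/-! ### The center and `pr` -/

lemma neg_one_mem_center : (-1 : SL2Z) ∈ Subgroup.center SL2Z := by
  rw [Matrix.SpecialLinearGroup.mem_center_iff]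
  refine ⟨-1, by norm_num, ?_⟩
  ext i j
  fin_cases i <;> fin_cases j <;> simp

lemma pr_neg (g : SL2Z) : pr (-g) = pr g := by
  have h1 : (-g) = (-1) * g := by simp
  have h2 : pr (-1) = 1 := by
    rw [pr, QuotientGroup.mk'_apply, QuotientGroup.eq_one_iff]
    exact neg_one_mem_center
  rw [h1, map_mul, h2, one_mul]

lemma coe_smul_int (g : SL2Z) (z : ℍ) :
    ((g • z : ℍ) : ℂ) = ((g 0 0 : ℝ) * z + (g 0 1 : ℝ)) / ((g 1 0 : ℝ) * z + (g 1 1 : ℝ)) := by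
  rw [UpperHalfPlane.specialLinearGroup_apply]
  simp [UpperHalfPlane.coe_mk]

lemma neg_one_smul_triv (z : ℍ) : ((-1 : SL2Z) • z) = z := by
  have h := coe_smul_int (-1) z
  have h00 : ((-1 : SL2Z) 0 0 : ℤ) = -1 := by simp
  have h01 : ((-1 : SL2Z) 0 1 : ℤ) = 0 := by simp
  have h10 : ((-1 : SL2Z) 1 0 : ℤ) = 0 := by simp
  have h11 : ((-1 : SL2Z) 1 1 : ℤ) = -1 := by simp
  rw [h00, h01, h10, h11] at h
  apply UpperHalfPlane.ext
  rw [h]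
  push_cast
  ring

lemma eq_one_or_neg_one_of_mem_center {g : SL2Z} (hg : g ∈ Subgroup.center SL2Z) :
    g = 1 ∨ g = -1 := by
  rw [Matrix.SpecialLinearGroup.mem_center_iff] at hg
  obtain ⟨r, hr2, hr⟩ := hg
  have hcard : Fintype.card (Fin 2) = 2 := by simp
  rw [hcard] at hr2
  have hr' : r = 1 ∨ r = -1 := by
    have h1 : r * r = 1 := by nlinarith [sq_nonneg r]
    exact Int.isUnit_iff.mp (IsUnit.of_mul_eq_one r h1)
  rcases hr' with h | h
  · left; ext i j
    rw [← hr, h]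
    fin_cases i <;> fin_cases j <;> simp
  · right; ext i j
    rw [← hr, h]
    fin_cases i <;> fin_cases j <;> simp

lemma center_le_ker : Subgroup.center SL2Z ≤ (MulAction.toPermHom SL2Z ℍ).ker := by
  intro g hg
  rw [MonoidHom.mem_ker]
  ext z
  simp only [MulAction.toPermHom_apply, MulAction.toPerm_apply, Equiv.Perm.coe_one, id_eq]
  rcases eq_one_or_neg_one_of_mem_center hg with h | h
  · rw [h, one_smul]
  · rw [h, neg_one_smul_triv]

noncomputable def pslPerm : PSL2Z →* Equiv.Perm ℍ :=
  QuotientGroup.lift (Subgroup.center SL2Z) (MulAction.toPermHom SL2Z ℍ) center_le_ker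

noncomputable instance : MulAction PSL2Z ℍ := MulAction.compHom ℍ pslPerm

lemma pr_smul (g : SL2Z) (z : ℍ) : (pr g) • z = g • z := rfl

/-! ### Moebius action formulas -/

lemma T2_smul (z : ℍ) : ((T2 • z : ℍ) : ℂ) = (z : ℂ) + 2 := by
  rw [coe_smul_int]
  have h1 : (T2 0 0 : ℤ) = 1 := by simp [T2]
  have h2 : (T2 0 1 : ℤ) = 2 := by simp [T2]
  have h3 : (T2 1 0 : ℤ) = 0 := by simp [T2]
  have h4 : (T2 1 1 : ℤ) = 1 := by simp [T2]
  rw [h1, h2, h3, h4]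
  push_cast
  ring

lemma T2i_smul (z : ℍ) : ((T2i • z : ℍ) : ℂ) = (z : ℂ) - 2 := by
  rw [coe_smul_int]
  have h1 : (T2i 0 0 : ℤ) = 1 := by simp [T2i]
  have h2 : (T2i 0 1 : ℤ) = -2 := by simp [T2i]
  have h3 : (T2i 1 0 : ℤ) = 0 := by simp [T2i]
  have h4 : (T2i 1 1 : ℤ) = 1 := by simp [T2i]
  rw [h1, h2, h3, h4]
  push_cast
  ring_nf

lemma Bm_smul (z : ℍ) : ((Bm • z : ℍ) : ℂ) = (z : ℂ) / (-2 * z + 1) := by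
  rw [coe_smul_int]
  have h1 : (Bm 0 0 : ℤ) = 1 := by simp [Bm]
  have h2 : (Bm 0 1 : ℤ) = 0 := by simp [Bm]
  have h3 : (Bm 1 0 : ℤ) = -2 := by simp [Bm]
  have h4 : (Bm 1 1 : ℤ) = 1 := by simp [Bm]
  rw [h1, h2, h3, h4]
  push_cast
  ring_nf

lemma Bmi_smul (z : ℍ) : ((Bmi • z : ℍ) : ℂ) = (z : ℂ) / (2 * z + 1) := by
  rw [coe_smul_int]
  have h1 : (Bmi 0 0 : ℤ) = 1 := by simp [Bmi]
  have h2 : (Bmi 0 1 : ℤ) = 0 := by simp [Bmi]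
  have h3 : (Bmi 1 0 : ℤ) = 2 := by simp [Bmi]
  have h4 : (Bmi 1 1 : ℤ) = 1 := by simp [Bmi]
  rw [h1, h2, h3, h4]
  push_cast
  ring_nf

/-! ### The homomorphism -/

noncomputable def aGen : Bool → PSL2Z := fun b => if b then pr T2 else pr Bm
noncomputable def phi : FreeGroup Bool →* PSL2Z := FreeGroup.lift aGen

def XS : Bool → Set ℍ
  | true => {z | 1 ≤ (z : ℂ).re}
  | false => {z | Complex.normSq (2 * (z : ℂ) + 1) ≤ 1}
def YS : Bool → Set ℍ
  | true => {z | (z : ℂ).re ≤ -1}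
  | false => {z | Complex.normSq (2 * (z : ℂ) - 1) ≤ 1}

lemma im_pos' (z : ℍ) : 0 < (z : ℂ).im := z.2

lemma normSq_p (z : ℂ) : Complex.normSq (2 * z + 1) = (2 * z.re + 1)^2 + (2 * z.im)^2 := by
  simp [Complex.normSq_apply, Complex.add_re, Complex.add_im, Complex.mul_re, Complex.mul_im]
  ring

lemma normSq_m (z : ℂ) : Complex.normSq (2 * z - 1) = (2 * z.re - 1)^2 + (2 * z.im)^2 := by
  simp [Complex.normSq_apply, Complex.sub_re, Complex.sub_im, Complex.mul_re, Complex.mul_im]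
  ring

lemma phi_injective : Function.Injective phi := by
  apply FreeGroup.injective_lift_of_ping_pong aGen XS YS
  · -- X nonempty
    intro b
    cases b
    · refine ⟨⟨(-1/2 : ℂ) + Complex.I/2, by norm_num⟩, ?_⟩
      show Complex.normSq (2 * ((-1/2 : ℂ) + Complex.I/2) + 1) ≤ 1
      have h : (2 : ℂ) * (((-1/2 : ℂ) + Complex.I/2)) + 1 = Complex.I := by ring
      rw [h]; simp
    · refine ⟨⟨(1 : ℂ) + Complex.I, by simp⟩, ?_⟩
      show (1 : ℝ) ≤ ((1 : ℂ) + Complex.I).re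
      simp
  · -- X pairwise disjoint
    rintro (_|_) (_|_) h <;> simp only [Function.onFun] <;> try exact absurd rfl h
    all_goals
      rw [Set.disjoint_left]
      intro z hz hz'
    · simp only [XS, Set.mem_setOf_eq] at hz hz'
      rw [normSq_p] at hz
      nlinarith [im_pos' z]
    · simp only [XS, Set.mem_setOf_eq] at hz hz'
      rw [normSq_p] at hz'
      nlinarith [im_pos' z]
  · -- Y pairwise disjoint
    rintro (_|_) (_|_) h <;> simp only [Function.onFun] <;> try exact absurd rfl h
    all_goals
      rw [Set.disjoint_left]
      intro z hz hz'
    · simp only [YS, Set.mem_setOf_eq] at hz hz'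
      rw [normSq_m] at hz
      nlinarith [im_pos' z]
    · simp only [YS, Set.mem_setOf_eq] at hz hz'
      rw [normSq_m] at hz'
      nlinarith [im_pos' z]
  · -- XY disjoint
    rintro (_|_) (_|_) <;> rw [Set.disjoint_left] <;> intro z hz hz' <;>
      simp only [XS, YS, Set.mem_setOf_eq] at hz hz'
    · rw [normSq_p] at hz; rw [normSq_m] at hz'
      nlinarith [im_pos' z]
    · rw [normSq_p] at hz
      nlinarith [im_pos' z]
    · rw [normSq_m] at hz'
      nlinarith [im_pos' z]
    · linarith
  · -- hX
    rintro (_|_) x hx <;> obtain ⟨z, hz, rfl⟩ := hx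
    · simp only [YS, XS, Set.mem_compl_iff, Set.mem_setOf_eq, not_le] at hz ⊢
      have e : aGen false • z = Bm • z := by rw [show aGen false = pr Bm from rfl, pr_smul]
      rw [e, Bm_smul]
      have hd : (-2 * (z:ℂ) + 1) ≠ 0 := by
        intro h
        have h2 := congrArg Complex.im h
        simp [Complex.add_im, Complex.mul_im] at h2
        exact z.im_ne_zero h2
      have h2 : 2 * ((z:ℂ) / (-2 * z + 1)) + 1 = 1 / (-2 * (z:ℂ) + 1) := by
        rw [mul_div_assoc', eq_div_iff hd, add_mul, div_mul_cancel₀ _ hd]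
        ring
      rw [h2, map_div₀, Complex.normSq_one]
      have hnn : Complex.normSq (-2 * (z:ℂ) + 1) = Complex.normSq (2 * (z:ℂ) - 1) := by
        rw [show (-2 * (z:ℂ) + 1) = -(2 * (z:ℂ) - 1) by ring, Complex.normSq_neg]
      rw [hnn, div_le_one (by positivity)]
      linarith
    · simp only [YS, XS, Set.mem_compl_iff, Set.mem_setOf_eq, not_le] at hz ⊢
      have e : aGen true • z = T2 • z := by rw [show aGen true = pr T2 from rfl, pr_smul]
      rw [e]
      have h : ((T2 • z : ℍ) : ℂ).re = (z : ℂ).re + 2 := by rw [T2_smul]; simp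
      rw [h]
      linarith
  · -- hY
    rintro (_|_) x hx <;> obtain ⟨z, hz, rfl⟩ := hx
    · simp only [XS, YS, Set.mem_compl_iff, Set.mem_setOf_eq, not_le] at hz ⊢
      have e : (aGen⁻¹) false • z = Bmi • z := by
        rw [show (aGen⁻¹) false = (pr Bm)⁻¹ from rfl, ← map_inv, Bm_inv, pr_smul]
      rw [e, Bmi_smul]
      have hd : (2 * (z:ℂ) + 1) ≠ 0 := by
        intro h
        have h2 := congrArg Complex.im h
        simp [Complex.add_im, Complex.mul_im] at h2
        exact z.im_ne_zero h2
      have h2 : 2 * ((z:ℂ) / (2 * z + 1)) - 1 = -1 / (2 * (z:ℂ) + 1) := by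
        rw [mul_div_assoc', eq_div_iff hd, sub_mul, div_mul_cancel₀ _ hd]
        ring
      rw [h2, map_div₀]
      have h3 : Complex.normSq (-1 : ℂ) = 1 := by simp
      rw [h3, div_le_one (by positivity)]
      linarith
    · simp only [XS, YS, Set.mem_compl_iff, Set.mem_setOf_eq, not_le] at hz ⊢
      have e : (aGen⁻¹) true • z = T2i • z := by
        rw [show (aGen⁻¹) true = (pr T2)⁻¹ from rfl, ← map_inv, T2_inv, pr_smul]
      rw [e]
      have h : ((T2i • z : ℍ) : ℂ).re = (z : ℂ).re - 2 := by rw [T2i_smul]; simp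
      rw [h]
      linarith

/-! ### Surjectivity onto `Γ(2)` -/

lemma zmod2_zero {x : ℤ} (h : (x : ZMod 2) = 0) : x % 2 = 0 := by
  have := (ZMod.intCast_zmod_eq_zero_iff_dvd x 2).mp h
  omega

lemma zmod2_one {x : ℤ} (h : (x : ZMod 2) = 1) : x % 2 = 1 := by
  have h' : ((x - 1 : ℤ) : ZMod 2) = 0 := by push_cast; rw [h]; ring
  have := (ZMod.intCast_zmod_eq_zero_iff_dvd (x - 1) 2).mp h'
  omega

lemma zmod2_of_even {x : ℤ} (h : x % 2 = 0) : (x : ZMod 2) = 0 := by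
  rw [ZMod.intCast_zmod_eq_zero_iff_dvd]
  omega

lemma zmod2_of_odd {x : ℤ} (h : x % 2 = 1) : (x : ZMod 2) = 1 := by
  have h' : ((x - 1 : ℤ) : ZMod 2) = 0 := by
    rw [ZMod.intCast_zmod_eq_zero_iff_dvd]
    omega
  push_cast at h'
  linear_combination h'

lemma gamma2_parity {M : SL2Z} (hM : M ∈ CongruenceSubgroup.Gamma 2) :
    M 0 0 % 2 = 1 ∧ M 0 1 % 2 = 0 ∧ M 1 0 % 2 = 0 ∧ M 1 1 % 2 = 1 := by
  rw [CongruenceSubgroup.Gamma_mem] at hM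
  exact ⟨zmod2_one hM.1, zmod2_zero hM.2.1, zmod2_zero hM.2.2.1, zmod2_one hM.2.2.2⟩

lemma T2z_entries (n : ℤ) :
    T2z n 0 0 = 1 ∧ T2z n 0 1 = 2*n ∧ T2z n 1 0 = 0 ∧ T2z n 1 1 = 1 := by
  refine ⟨?_, ?_, ?_, ?_⟩ <;> simp [T2z]

lemma Bz_entries (n : ℤ) :
    Bz n 0 0 = 1 ∧ Bz n 0 1 = 0 ∧ Bz n 1 0 = 2*n ∧ Bz n 1 1 = 1 := by
  refine ⟨?_, ?_, ?_, ?_⟩ <;> simp [Bz]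

lemma T2z_mem (n : ℤ) : T2z n ∈ CongruenceSubgroup.Gamma 2 := by
  rw [CongruenceSubgroup.Gamma_mem]
  obtain ⟨h1, h2, h3, h4⟩ := T2z_entries n
  rw [h1, h2, h3, h4]
  refine ⟨zmod2_of_odd (by omega), zmod2_of_even (by omega), zmod2_of_even (by omega),
    zmod2_of_odd (by omega)⟩

lemma Bz_mem (n : ℤ) : Bz n ∈ CongruenceSubgroup.Gamma 2 := by
  rw [CongruenceSubgroup.Gamma_mem]
  obtain ⟨h1, h2, h3, h4⟩ := Bz_entries n
  rw [h1, h2, h3, h4]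
  refine ⟨zmod2_of_odd (by omega), zmod2_of_even (by omega), zmod2_of_even (by omega),
    zmod2_of_odd (by omega)⟩

lemma T2z_range (n : ℤ) : pr (T2z n) ∈ phi.range := by
  refine ⟨(FreeGroup.of true) ^ n, ?_⟩
  rw [map_zpow]
  rw [show phi (FreeGroup.of true) = pr T2 from FreeGroup.lift_apply_of]
  rw [← map_zpow, T2_zpow]

lemma Bz_range (n : ℤ) : pr (Bz n) ∈ phi.range := by
  refine ⟨(FreeGroup.of false) ^ (-n), ?_⟩
  have hB : Bm = Bmi⁻¹ := by rw [← Bm_inv, inv_inv]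
  have hz : Bm ^ (-n) = Bz n := by
    rw [hB, inv_zpow, ← zpow_neg, neg_neg, Bmi_zpow]
  rw [map_zpow]
  rw [show phi (FreeGroup.of false) = pr Bm from FreeGroup.lift_apply_of]
  rw [← map_zpow, hz]

lemma red (a c : ℤ) (hc : c ≠ 0) (hpar2 : (a + c) % 2 = 1) :
    ∃ n : ℤ, (a + 2 * n * c).natAbs < c.natAbs := by
  obtain ⟨N, hNdef⟩ : ∃ N : ℤ, ((c.natAbs : ℤ)) = N := ⟨_, rfl⟩
  have hN : (0:ℤ) < N := by rw [← hNdef]; exact_mod_cast Int.natAbs_pos.mpr hc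
  have hNe : (2 * N) ≠ 0 := by omega
  have hNpos : (0:ℤ) < 2 * N := by omega
  obtain ⟨r, k, hrk, hr0, hr1⟩ :
      ∃ r k : ℤ, a = 2 * (N * k) + r ∧ 0 ≤ r ∧ r < 2 * N :=
    ⟨a % (2 * N), a / (2 * N),
      by have := Int.mul_ediv_add_emod a (2 * N); linarith,
      Int.emod_nonneg a hNe, Int.emod_lt_of_pos a hNpos⟩
  have hpar : r % 2 = a % 2 := by
    have h1 : (2 * (N * k)) % 2 = 0 := Int.mul_emod_right 2 _
    omega
  have hNc : N % 2 = c % 2 ∨ N % 2 = -(c % 2) := by omega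
  have hrne : r ≠ N := by omega
  have hc' : c = N ∨ c = -N := by
    rcases Int.natAbs_eq c with h | h
    · left; rw [h, hNdef]
    · right; rw [h, hNdef]
  rcases hc' with hc' | hc'
  · rcases lt_or_gt_of_ne hrne with h | h
    · refine ⟨-k, ?_⟩
      have he : a + 2 * (-k) * c = r := by rw [hc']; linear_combination hrk
      rw [he]; omega
    · refine ⟨-(k+1), ?_⟩
      have he : a + 2 * (-(k+1)) * c = r - 2 * N := by
        rw [hc']; linear_combination hrk
      rw [he]; omega
  · rcases lt_or_gt_of_ne hrne with h | h
    · refine ⟨k, ?_⟩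
      have he : a + 2 * k * c = r := by rw [hc']; linear_combination hrk
      rw [he]; omega
    · refine ⟨k+1, ?_⟩
      have he : a + 2 * (k+1) * c = r - 2 * N := by
        rw [hc']; linear_combination hrk
      rw [he]; omega

lemma base (M : SL2Z) (hM : M ∈ CongruenceSubgroup.Gamma 2) (h0 : M 1 0 = 0) :
    pr M ∈ phi.range := by
  obtain ⟨h00, h01, h10, h11⟩ := gamma2_parity hM
  have hdet : M 0 0 * M 1 1 - M 0 1 * M 1 0 = 1 := by
    have h := M.2
    rw [Matrix.det_fin_two] at h
    exact h
  rw [h0, mul_zero, sub_zero] at hdet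
  rcases Int.mul_eq_one_iff_eq_one_or_neg_one.mp hdet with ⟨ha, hd⟩ | ⟨ha, hd⟩
  · have hMeq : M = T2z (M 0 1 / 2) := by
      ext i j
      fin_cases i <;> fin_cases j <;>
        simp only [T2z, Matrix.SpecialLinearGroup.coe_mk] <;>
        simp [Matrix.cons_val_zero, Matrix.cons_val_one]
      · exact ha
      · omega
      · exact h0
      · exact hd
    rw [hMeq]
    exact T2z_range _
  · have hMeq : M = -T2z (-(M 0 1) / 2) := by
      ext i j
      fin_cases i <;> fin_cases j <;>
        simp only [Matrix.SpecialLinearGroup.coe_neg, Matrix.neg_apply] <;>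
        simp only [T2z, Matrix.SpecialLinearGroup.coe_neg, Matrix.SpecialLinearGroup.coe_mk,
          Matrix.neg_apply] <;>
        simp [Matrix.cons_val_zero, Matrix.cons_val_one]
      · exact ha
      · omega
      · exact h0
      · exact hd
    rw [hMeq, pr_neg]
    exact T2z_range _

lemma key : ∀ (k : ℕ) (M : SL2Z), M ∈ CongruenceSubgroup.Gamma 2 →
    (M 1 0).natAbs ≤ k → pr M ∈ phi.range := by
  intro k
  induction k with
  | zero =>
    intro M hM hk
    apply base M hM
    omega
  | succ k ih =>
    intro M hM hk
    by_cases h0 : M 1 0 = 0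
    · exact base M hM h0
    · obtain ⟨h00, h01, h10, h11⟩ := gamma2_parity hM
      obtain ⟨n, hn⟩ := red (M 0 0) (M 1 0) h0 (by omega)
      obtain ⟨M', hM'def⟩ : ∃ M' : SL2Z, M' = T2z n * M := ⟨_, rfl⟩
      have e00 : M' 0 0 = M 0 0 + 2 * n * M 1 0 := by
        rw [hM'def, SL_mul_apply]
        obtain ⟨g1, g2, g3, g4⟩ := T2z_entries n
        rw [g1, g2]
        ring
      have e10 : M' 1 0 = M 1 0 := by
        rw [hM'def, SL_mul_apply]
        obtain ⟨g1, g2, g3, g4⟩ := T2z_entries n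
        rw [g3, g4]
        ring
      obtain ⟨p, hp⟩ : ∃ p : ℤ, p = n * (M 1 0) := ⟨_, rfl⟩
      have e00' : M' 0 0 = M 0 0 + 2 * p := by rw [e00, hp]; ring
      have h00' : M' 0 0 % 2 = 1 := by rw [e00']; omega
      have hne : M' 0 0 ≠ 0 := fun h => by rw [h] at h00'; norm_num at h00'
      obtain ⟨m, hm⟩ := red (M 1 0) (M' 0 0) hne (by omega)
      obtain ⟨M'', hM''def⟩ : ∃ M'' : SL2Z, M'' = Bz m * M' := ⟨_, rfl⟩
      have f10 : M'' 1 0 = M 1 0 + 2 * m * M' 0 0 := by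
        rw [hM''def, SL_mul_apply]
        obtain ⟨g1, g2, g3, g4⟩ := Bz_entries m
        rw [g3, g4, e10]
        ring
      have h2lt : (M' 0 0).natAbs < (M 1 0).natAbs := by
        rw [← e00] at hn
        exact hn
      have hlt : (M'' 1 0).natAbs ≤ k := by
        rw [f10]
        exact Nat.lt_succ_iff.mp (Nat.lt_of_lt_of_le (hm.trans h2lt) hk)
      have hmem : M'' ∈ CongruenceSubgroup.Gamma 2 := by
        rw [hM''def, hM'def]
        exact Subgroup.mul_mem _ (Bz_mem m) (Subgroup.mul_mem _ (T2z_mem n) hM)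
      have hrec := ih M'' hmem hlt
      have hMeq : pr M = (pr (T2z n))⁻¹ * ((pr (Bz m))⁻¹ * pr M'') := by
        rw [hM''def, hM'def, map_mul, map_mul]
        group
      rw [hMeq]
      exact Subgroup.mul_mem _ (Subgroup.inv_mem _ (T2z_range n))
        (Subgroup.mul_mem _ (Subgroup.inv_mem _ (Bz_range m)) hrec)

lemma T2_mem : T2 ∈ CongruenceSubgroup.Gamma 2 := by
  have := T2z_mem 1
  have h : T2z 1 = T2 := by
    ext i j
    fin_cases i <;> fin_cases j <;> simp [T2z, T2]
  rwa [h] at this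

lemma Bm_mem : Bm ∈ CongruenceSubgroup.Gamma 2 := by
  have := Bz_mem (-1)
  have h : Bz (-1) = Bm := by
    ext i j
    fin_cases i <;> fin_cases j <;> simp [Bz, Bm]
  rwa [h] at this

lemma range_eq : phi.range = Gamma2PSL := by
  apply le_antisymm
  · rw [phi, FreeGroup.range_lift_eq_closure, Subgroup.closure_le]
    rintro x ⟨b, rfl⟩
    cases b
    · exact ⟨Bm, Bm_mem, rfl⟩
    · exact ⟨T2, T2_mem, rfl⟩
  · rintro x ⟨M, hM, rfl⟩
    exact key (M 1 0).natAbs M hM le_rfl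

/-- `Γ(2) ⊂ PSL(2, ℤ)` is freely generated by `A₁ = T²` and `A₂ = QT²Q`:
there is an injective homomorphism from the free group on two generators onto
`Γ(2)` sending the generators to `A₁` and `A₂`. -/
theorem Gamma2_free_on_two_generators :
    ∃ φ : FreeGroup Bool →* PSL2Z,
      Function.Injective φ ∧
      φ.range = Gamma2PSL ∧
      φ (FreeGroup.of true) = pr (Tm ^ 2) ∧
      φ (FreeGroup.of false) = pr (Qm * Tm ^ 2 * Qm) := by
  refine ⟨phi, phi_injective, range_eq, ?_, ?_⟩
  · rw [Tm_sq]
    exact FreeGroup.lift_apply_of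
  · rw [QTQ, pr_neg]
    exact FreeGroup.lift_apply_of
end

section
/- Let n be even and define G on 𝒫_n by (Gφ)(z) = zⁿ(−φ((z+1)/z) + φ((z−1)/z)). Then G maps 𝒫_n into the odd polynomials of degree ≤ n−1, i.e. (Gφ)(−z) = −(Gφ)(z) and deg(Gφ) ≤ n−1, and the restriction G : 𝒫_n^even → 𝒫_{n−1}^odd is surjective with kernel the constant polynomials. -/
open Polynomial

/-- The operator `G` on polynomials of degree `≤ n`:
`(Gφ)(z) = zⁿ(−φ((z+1)/z) + φ((z−1)/z))`, written as a polynomial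
(using `zⁿφ((z±1)/z) = ∑ coeff i·(z±1)^i·z^{n−i}` for `deg φ ≤ n`). -/
noncomputable def Gop (n : ℕ) (φ : ℂ[X]) : ℂ[X] :=
  ∑ i ∈ Finset.range (n + 1),
    C (φ.coeff i) * (-(X + 1) ^ i + (X - 1) ^ i) * X ^ (n - i)

/-- A polynomial is even if `φ(−z) = φ(z)` for all `z`. -/
def IsEvenPoly (φ : ℂ[X]) : Prop := ∀ z : ℂ, φ.eval (-z) = φ.eval z

/-- A polynomial is odd if `φ(−z) = −φ(z)` for all `z`. -/
def IsOddPoly (φ : ℂ[X]) : Prop := ∀ z : ℂ, φ.eval (-z) = -φ.eval z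

lemma coeff_comp_neg_X (p : ℂ[X]) (k : ℕ) :
    (p.comp (-X)).coeff k = (-1) ^ k * p.coeff k := by
  rw [comp_eq_sum_left, Polynomial.sum, finset_sum_coeff]
  have h : ∀ e ∈ p.support, (C (p.coeff e) * (-X) ^ e).coeff k
      = if k = e then (-1) ^ k * p.coeff k else 0 := by
    intro e _
    have he : (-X : ℂ[X]) ^ e = C ((-1)^e) * X ^ e := by
      rw [neg_pow, map_pow, map_neg, map_one]
    rw [he, ← mul_assoc, ← C_mul, coeff_C_mul, coeff_X_pow]
    split_ifs with h1
    · subst h1; ring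
    · ring
  rw [Finset.sum_congr rfl h, Finset.sum_ite_eq p.support k fun _ => (-1)^k * p.coeff k]
  split_ifs with hk
  · rfl
  · rw [notMem_support_iff.mp hk, mul_zero]

lemma IsOddPoly.coeff_even {χ : ℂ[X]} (h : IsOddPoly χ) {k : ℕ} (hk : Even k) :
    χ.coeff k = 0 := by
  have hcomp : χ.comp (-X) = -χ := by
    apply Polynomial.funext
    intro r
    rw [eval_comp, eval_neg, eval_neg, eval_X]
    exact h r
  have := congrArg (fun p => p.coeff k) hcomp
  simp only [coeff_comp_neg_X, coeff_neg, hk.neg_one_pow, one_mul] at this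
  have h2 : (2:ℂ) * χ.coeff k = 0 := by linear_combination this
  simpa using h2

lemma Gop_eval (n : ℕ) (φ : ℂ[X]) (hφ : φ.natDegree < n + 1) (z : ℂ) (hz : z ≠ 0) :
    (Gop n φ).eval z = z ^ n * (-φ.eval ((z + 1) / z) + φ.eval ((z - 1) / z)) := by
  rw [Gop, eval_finset_sum, eval_eq_sum_range' hφ, eval_eq_sum_range' hφ,
    ← Finset.sum_neg_distrib, ← Finset.sum_add_distrib, Finset.mul_sum]
  refine Finset.sum_congr rfl fun i hi => ?_
  have hin : i ≤ n := by simpa [Nat.lt_succ_iff] using Finset.mem_range.mp hi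
  have hp : z ^ (n - i) * z ^ i = z ^ n := by rw [← pow_add]; congr 1; omega
  have hzi : (z : ℂ) ^ i ≠ 0 := pow_ne_zero _ hz
  have key : ∀ w : ℂ, z ^ n * (w ^ i / z ^ i) = w ^ i * z ^ (n - i) := by
    intro w
    rw [← hp]
    field_simp
  simp only [eval_mul, eval_C, eval_add, eval_neg, eval_sub, eval_pow, eval_X, eval_one]
  rw [div_pow, div_pow]
  linear_combination (φ.coeff i) * key (z + 1) - (φ.coeff i) * key (z - 1)

lemma Gop_odd (n : ℕ) (hn : Even n) (φ : ℂ[X]) : IsOddPoly (Gop n φ) := by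
  intro z
  rw [Gop]
  simp only [eval_finset_sum, eval_mul, eval_C, eval_add, eval_neg, eval_sub,
    eval_pow, eval_X, eval_one]
  rw [← Finset.sum_neg_distrib]
  refine Finset.sum_congr rfl fun i hi => ?_
  have hin : i ≤ n := by simpa [Nat.lt_succ_iff] using Finset.mem_range.mp hi
  have key : ((-1 : ℂ)) ^ i * (-1) ^ (n - i) = 1 := by
    rw [← pow_add, show i + (n - i) = n by omega]
    · exact hn.neg_one_pow
  have e1 : (-(z - 1) : ℂ) ^ i = (-1) ^ i * (z - 1) ^ i := by rw [neg_pow]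
  have e2 : (-(z + 1) : ℂ) ^ i = (-1) ^ i * (z + 1) ^ i := by rw [neg_pow]
  have e3 : (-z : ℂ) ^ (n - i) = (-1) ^ (n - i) * z ^ (n - i) := by rw [neg_pow]
  linear_combination (φ.coeff i * (-(-(z-1))^i + (-(z+1))^i)) * e3
    - (φ.coeff i * (-1)^(n-i) * z^(n-i)) * e1 + (φ.coeff i * (-1)^(n-i) * z^(n-i)) * e2
    + (φ.coeff i * ((z+1)^i - (z-1)^i) * z^(n-i)) * key

lemma Gop_degLT (n : ℕ) (φ : ℂ[X]) : Gop n φ ∈ degreeLT ℂ n := by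
  rw [Gop]
  refine Submodule.sum_mem _ fun i hi => ?_
  have hin : i ≤ n := by simpa [Nat.lt_succ_iff] using Finset.mem_range.mp hi
  rw [mem_degreeLT]
  rcases Nat.eq_zero_or_pos i with h0 | hpos
  · subst h0
    simp only [pow_zero, neg_add_cancel, mul_zero, zero_mul, degree_zero]
    exact WithBot.bot_lt_coe n
  · have h1 : (X + 1 : ℂ[X]) = X + C 1 := by rw [map_one]
    have h2 : (X - 1 : ℂ[X]) = X - C 1 := by rw [map_one]
    have hq : degree (-(X + 1 : ℂ[X]) ^ i + (X - 1) ^ i) < i := by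
      rw [neg_add_eq_sub, h1, h2]
      have := degree_sub_lt (p := (X - C 1 : ℂ[X]) ^ i) (q := (X + C 1 : ℂ[X]) ^ i)
        (by rw [degree_pow, degree_pow, degree_X_sub_C, degree_X_add_C])
        (((monic_X_sub_C (1:ℂ)).pow i).ne_zero)
        (by rw [((monic_X_sub_C (1:ℂ)).pow i).leadingCoeff, ((monic_X_add_C (1:ℂ)).pow i).leadingCoeff])
      rw [degree_pow, degree_X_sub_C] at this
      simpa using this
    calc degree (C (φ.coeff i) * (-(X + 1) ^ i + (X - 1) ^ i) * X ^ (n - i))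
        ≤ degree (C (φ.coeff i) * (-(X + 1) ^ i + (X - 1) ^ i)) + degree ((X : ℂ[X]) ^ (n - i)) :=
          degree_mul_le _ _
      _ ≤ (degree (C (φ.coeff i)) + degree (-(X + 1 : ℂ[X]) ^ i + (X - 1) ^ i)) + degree ((X : ℂ[X]) ^ (n - i)) :=
          add_le_add (degree_mul_le _ _) le_rfl
      _ ≤ (0 + degree (-(X + 1 : ℂ[X]) ^ i + (X - 1) ^ i)) + degree ((X : ℂ[X]) ^ (n - i)) :=
          add_le_add (add_le_add degree_C_le le_rfl) le_rfl
      _ = degree (-(X + 1 : ℂ[X]) ^ i + (X - 1) ^ i) + (n - i : ℕ) := by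
          rw [zero_add, degree_X_pow]
      _ < (i : WithBot ℕ) + (n - i : ℕ) := WithBot.add_lt_add_right WithBot.coe_ne_bot hq
      _ = (n : WithBot ℕ) := by rw [← Nat.cast_add, show i + (n - i) = n by omega]

lemma one_sub_X_pow_coeff (k m : ℕ) :
    (((1 - X : ℂ[X])) ^ k).coeff m = (-1) ^ m * (k.choose m : ℂ) := by
  have h : ((1 - X : ℂ[X])) ^ k = ((1 + X : ℂ[X]) ^ k).comp (-X) := by
    rw [pow_comp, add_comp, one_comp, X_comp, ← sub_eq_add_neg]
  rw [h, coeff_comp_neg_X, coeff_one_add_X_pow]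

lemma diff_solve : ∀ (d : ℕ) (χ : ℂ[X]), IsOddPoly χ → χ.degree < (d : ℕ) →
    ∃ φ : ℂ[X], IsEvenPoly φ ∧ φ.degree < ((d + 1 : ℕ) : WithBot ℕ) ∧
      ∀ u : ℂ, φ.eval (1 - u) - φ.eval (1 + u) = χ.eval u := by
  intro d
  induction d using Nat.strong_induction_on with
  | _ d IH =>
    match d with
    | 0 =>
      intro χ _ hdeg
      have hχ : χ = 0 := by
        rw [← degree_eq_bot]
        exact Nat.WithBot.lt_zero_iff.mp (by exact_mod_cast hdeg)
      subst hχ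
      exact ⟨0, fun z => by simp, by simp [degree_zero],
        fun u => by simp⟩
    | e + 1 =>
      intro χ hodd hdeg
      rcases Nat.even_or_odd e with he | he
      ·
        have hc : χ.coeff e = 0 := hodd.coeff_even he
        have hdeg' : χ.degree < (e : ℕ) := by
          rw [degree_lt_iff_coeff_zero]
          intro m hm
          rcases eq_or_lt_of_le hm with rfl | hlt
          · exact hc
          · exact coeff_eq_zero_of_degree_lt (lt_of_lt_of_le hdeg (by exact_mod_cast hlt))
        obtain ⟨φ, h1, h2, h3⟩ := IH e (by omega) χ hodd hdeg'
        exact ⟨φ, h1, lt_trans h2 (by exact_mod_cast Nat.lt_succ_self (e+1)), h3⟩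
      · -- e odd
        set k := e + 1 with hk
        have hke : Even k := by simpa [hk] using he.add_one
        set a := χ.coeff e with ha
        set c : ℂ := -a / (2 * (e + 1)) with hc
        have hne : ((e : ℂ) + 1) ≠ 0 := Nat.cast_add_one_ne_zero e
        set χ' : ℂ[X] := χ - C c * ((1 - X) ^ k - (1 + X) ^ k) with hχ'
        have hχ'eval : ∀ u : ℂ, χ'.eval u = χ.eval u - c * ((1 - u) ^ k - (1 + u) ^ k) := by
          intro u; simp [hχ']
        have hχ'odd : IsOddPoly χ' := by
          intro u
          rw [hχ'eval, hχ'eval]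
          have := hodd u
          rw [this]
          ring
        have hcoeffs : ∀ m : ℕ, e ≤ m → χ'.coeff m = 0 := by
          intro m hm
          rw [hχ', coeff_sub, coeff_C_mul, coeff_sub, one_sub_X_pow_coeff,
            coeff_one_add_X_pow]
          rcases eq_or_lt_of_le hm with rfl | hlt
          · rw [← ha, Nat.choose_succ_self_right, he.neg_one_pow]
            field_simp [hc]
            rw [hc]; push_cast; field_simp; ring
          · have h0 : χ.coeff m = 0 :=
              coeff_eq_zero_of_degree_lt (lt_of_lt_of_le hdeg (by exact_mod_cast hlt))
            rcases lt_or_ge m k with hmk | hmk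
            · omega
            rcases eq_or_lt_of_le hmk with rfl | hmk'
            · rw [h0, hke.neg_one_pow]; ring
            · rw [h0, Nat.choose_eq_zero_of_lt hmk']
              simp
        have hdeg' : χ'.degree < (e : ℕ) := by
          rw [degree_lt_iff_coeff_zero]
          intro m hm
          exact hcoeffs m hm
        obtain ⟨φ', h1, h2, h3⟩ := IH e (by omega) χ' hχ'odd hdeg'
        refine ⟨C c * X ^ k + φ', ?_, ?_, ?_⟩
        · intro z
          simp only [eval_add, eval_mul, eval_C, eval_pow, eval_X, hke.neg_pow, h1 z]
        · refine lt_of_le_of_lt (degree_add_le _ _) (max_lt ?_ (lt_trans h2 ?_))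
          · refine lt_of_le_of_lt (degree_C_mul_X_pow_le _ _) ?_
            exact_mod_cast Nat.lt_succ_self k
          · exact_mod_cast Nat.lt_succ_self (e + 1)
        · intro u
          have h4 := h3 u
          rw [hχ'eval] at h4
          simp only [eval_add, eval_mul, eval_C, eval_pow, eval_X]
          linear_combination h4

lemma natDegree_lt_of_mem_degreeLT {m : ℕ} (hm : 0 < m) {p : ℂ[X]}
    (hp : p ∈ degreeLT ℂ m) : p.natDegree < m := by
  rcases eq_or_ne p 0 with rfl | h
  · simpa using hm
  · exact (natDegree_lt_iff_degree_lt h).mpr (mem_degreeLT.mp hp)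

/-- For `n` even, `G` maps `𝒫_n` into the odd polynomials of degree `≤ n−1`,
and restricts to a surjection from the even polynomials of degree `≤ n` onto the
odd polynomials of degree `≤ n−1` whose kernel consists of the constants. -/
theorem Gop_properties (n : ℕ) (hn : Even n) :
    (∀ φ ∈ degreeLT ℂ (n + 1), ∀ z : ℂ, z ≠ 0 →
      (Gop n φ).eval z = z ^ n * (-φ.eval ((z + 1) / z) + φ.eval ((z - 1) / z))) ∧
    (∀ φ ∈ degreeLT ℂ (n + 1), IsOddPoly (Gop n φ) ∧ Gop n φ ∈ degreeLT ℂ n) ∧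
    (∀ ψ ∈ degreeLT ℂ n, IsOddPoly ψ →
      ∃ φ ∈ degreeLT ℂ (n + 1), IsEvenPoly φ ∧ Gop n φ = ψ) ∧
    (∀ φ ∈ degreeLT ℂ (n + 1), IsEvenPoly φ →
      (Gop n φ = 0 ↔ ∃ c : ℂ, φ = C c)) := by
  refine ⟨?_, ?_, ?_, ?_⟩
  · intro φ hφ z hz
    exact Gop_eval n φ (natDegree_lt_of_mem_degreeLT (Nat.succ_pos n) hφ) z hz
  · intro φ _
    exact ⟨Gop_odd n hn φ, Gop_degLT n φ⟩
  · -- surjectivity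
    intro ψ hψ hoddψ
    rcases Nat.eq_zero_or_pos n with rfl | hnpos
    · have hψ0 : ψ = 0 := by
        have := mem_degreeLT.mp hψ
        rw [← degree_eq_bot]
        exact Nat.WithBot.lt_zero_iff.mp (by exact_mod_cast this)
      refine ⟨0, ?_, fun z => by simp, ?_⟩
      · rw [mem_degreeLT]
        exact lt_of_lt_of_le (WithBot.bot_lt_coe 1) le_rfl |>.trans_le le_rfl |>.trans_le le_rfl
          |>.trans_le (le_of_eq rfl)
      · rw [hψ0]
        simp [Gop]
    · have hψnd : ψ.natDegree < n := natDegree_lt_of_mem_degreeLT hnpos hψ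
      have h00 : ψ.eval 0 = 0 := by
        have h := hoddψ 0
        rw [neg_zero] at h
        have h2 : (2:ℂ) * ψ.eval 0 = 0 := by linear_combination h
        simpa using h2
      set χ : ℂ[X] := ∑ j ∈ Finset.range n, C (ψ.coeff j) * X ^ (n - j) with hχdef
      have hχLT : χ ∈ degreeLT ℂ n := by
        refine Submodule.sum_mem _ fun j hj => ?_
        have hjn : j < n := Finset.mem_range.mp hj
        rcases Nat.eq_zero_or_pos j with rfl | hjpos
        · rw [← coeff_zero_eq_eval_zero] at h00
          rw [h00, map_zero, zero_mul]
          exact Submodule.zero_mem _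
        · rw [mem_degreeLT]
          exact lt_of_le_of_lt (degree_C_mul_X_pow_le _ _) (Nat.cast_lt.mpr (by omega))
      have hχdeg : χ.degree < (n : ℕ) := mem_degreeLT.mp hχLT
      have hχev : ∀ z : ℂ, z ≠ 0 → z ^ n * χ.eval (1 / z) = ψ.eval z := by
        intro z hz
        rw [hχdef, eval_finset_sum, eval_eq_sum_range' hψnd, Finset.mul_sum]
        refine Finset.sum_congr rfl fun j hj => ?_
        have hjn : j < n := Finset.mem_range.mp hj
        have hp : z ^ (n - j) * z ^ j = z ^ n := by rw [← pow_add]; congr 1; omega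
        simp only [eval_mul, eval_C, eval_pow, eval_X]
        rw [div_pow, one_pow]
        field_simp
        linear_combination (-(ψ.coeff j)) * hp
      have hχodd : IsOddPoly χ := by
        intro u
        by_cases hu : u = 0
        · have hz : χ.eval 0 = 0 := by
            rw [hχdef, eval_finset_sum]
            refine Finset.sum_eq_zero fun j hj => ?_
            have : n - j ≠ 0 := by have := Finset.mem_range.mp hj; omega
            simp [this]
          simp [hu, hz]
        · set z : ℂ := 1 / u with hzdef
          have hz : z ≠ 0 := one_div_ne_zero hu
          have hiz : 1 / z = u := by rw [hzdef, one_div_one_div]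
          have hizn : 1 / (-z) = -u := by rw [← hiz]; ring
          have e1 := hχev z hz
          have e2 := hχev (-z) (neg_ne_zero.mpr hz)
          rw [hiz] at e1
          rw [hizn, hn.neg_pow, hoddψ z] at e2
          have := e2.trans (congrArg Neg.neg e1).symm
          exact mul_left_cancel₀ (pow_ne_zero n hz) (by linear_combination this)
      obtain ⟨φ, heven, hφdeg, hD⟩ := diff_solve n χ hχodd hχdeg
      have hφmem : φ ∈ degreeLT ℂ (n + 1) := mem_degreeLT.mpr (by exact_mod_cast hφdeg)
      refine ⟨φ, hφmem, heven, ?_⟩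
      apply Polynomial.eq_of_infinite_eval_eq
      refine ((Set.finite_singleton (0:ℂ)).infinite_compl).mono ?_
      intro z hz
      have hz0 : z ≠ 0 := hz
      show (Gop n φ).eval z = ψ.eval z
      rw [Gop_eval n φ (natDegree_lt_of_mem_degreeLT (Nat.succ_pos n) hφmem) z hz0]
      have harg1 : (z + 1) / z = 1 + 1 / z := by rw [add_div, div_self hz0]
      have harg2 : (z - 1) / z = 1 - 1 / z := by rw [sub_div, div_self hz0]
      rw [harg1, harg2]
      linear_combination (z ^ n) * hD (1 / z) + hχev z hz0
  · -- kernel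
    intro φ hφ heven
    constructor
    · intro hG
      have hφnd : φ.natDegree < n + 1 := natDegree_lt_of_mem_degreeLT (Nat.succ_pos n) hφ
      have h1 : ∀ u : ℂ, φ.eval (1 - u) = φ.eval (1 + u) := by
        intro u
        by_cases hu : u = 0
        · rw [hu, sub_zero, add_zero]
        · set z : ℂ := 1 / u with hzdef
          have hz : z ≠ 0 := one_div_ne_zero hu
          have hiz : 1 / z = u := by rw [hzdef, one_div_one_div]
          have hev := Gop_eval n φ hφnd z hz
          rw [hG, eval_zero] at hev
          have harg1 : (z + 1) / z = 1 + u := by rw [add_div, div_self hz, hiz]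
          have harg2 : (z - 1) / z = 1 - u := by rw [sub_div, div_self hz, hiz]
          rw [harg1, harg2] at hev
          rcases mul_eq_zero.mp hev.symm with h | h
          · exact absurd h (pow_ne_zero n hz)
          · linear_combination h
      have h3 : ∀ w : ℂ, φ.eval (w + 2) = φ.eval w := by
        intro w
        have := h1 (w + 1)
        rw [show (1 - (w + 1) : ℂ) = -w by ring, show (1 + (w + 1) : ℂ) = w + 2 by ring] at this
        rw [← this, heven w]
      have h4 : ∀ k : ℕ, φ.eval (2 * (k : ℂ)) = φ.eval 0 := by
        intro k
        induction k with
        | zero => simp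
        | succ m ih =>
          push_cast
          rw [show (2 * ((m:ℂ) + 1)) = 2 * m + 2 by ring, h3]
          exact_mod_cast ih
      refine ⟨φ.eval 0, ?_⟩
      have hzero : φ - C (φ.eval 0) = 0 := by
        apply Polynomial.eq_zero_of_infinite_isRoot
        refine Set.infinite_of_injective_forall_mem (f := fun k : ℕ => (2 * k : ℂ)) ?_ ?_
        · intro s t hst
          simp only at hst
          have : (s : ℂ) = t := by
            field_simp at hst
            exact_mod_cast hst
          exact_mod_cast this
        · intro k
          simp only [Set.mem_setOf_eq, IsRoot.def, eval_sub, eval_C]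
          rw [h4 k, sub_self]
      exact sub_eq_zero.mp hzero
    · rintro ⟨c, rfl⟩
      rw [Gop]
      refine Finset.sum_eq_zero fun i hi => ?_
      cases i with
      | zero => simp
      | succ m =>
        rw [coeff_C]
        simp
end

section
/- For n even, the space of pairs (φ₅, φ₆) ∈ 𝒫_n × 𝒫_n satisfying the system φ₅(z−1) − φ₅(z+1) = zⁿ(−φ₆((z+1)/z) + φ₆((z−1)/z)) and φ₆(z−1) − φ₆(z+1) = zⁿ(−φ₅((z+1)/z) + φ₅((z−1)/z)) has dimension n/2 + 2; equivalently, both φ₅ and φ₆ in any solution are even polynomials, and the solution space is isomorphic to 𝒫_n^even × ℂ. -/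
open Polynomial

/-- The space of solutions `(φ₅, φ₆) ∈ 𝒫_n × 𝒫_n` of the system
`φ₅(z−1) − φ₅(z+1) = zⁿ(−φ₆((z+1)/z) + φ₆((z−1)/z))` and
`φ₆(z−1) − φ₆(z+1) = zⁿ(−φ₅((z+1)/z) + φ₅((z−1)/z))`
(as identities of rational functions, i.e. for all `z ≠ 0`). -/
noncomputable def SolSpace (n : ℕ) : Submodule ℂ (ℂ[X] × ℂ[X]) where
  carrier := {φ | φ.1 ∈ degreeLT ℂ (n + 1) ∧ φ.2 ∈ degreeLT ℂ (n + 1) ∧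
    (∀ z : ℂ, z ≠ 0 → φ.1.eval (z - 1) - φ.1.eval (z + 1) =
      z ^ n * (-φ.2.eval ((z + 1) / z) + φ.2.eval ((z - 1) / z))) ∧
    (∀ z : ℂ, z ≠ 0 → φ.2.eval (z - 1) - φ.2.eval (z + 1) =
      z ^ n * (-φ.1.eval ((z + 1) / z) + φ.1.eval ((z - 1) / z)))}
  zero_mem' := ⟨Submodule.zero_mem _, Submodule.zero_mem _, by simp, by simp⟩
  add_mem' := by
    rintro p q ⟨hp1, hp2, hp3, hp4⟩ ⟨hq1, hq2, hq3, hq4⟩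
    refine ⟨Submodule.add_mem _ hp1 hq1, Submodule.add_mem _ hp2 hq2, ?_, ?_⟩ <;>
      intro z hz <;> simp only [Prod.fst_add, Prod.snd_add, eval_add]
    · linear_combination hp3 z hz + hq3 z hz
    · linear_combination hp4 z hz + hq4 z hz
  smul_mem' := by
    rintro c p ⟨hp1, hp2, hp3, hp4⟩
    refine ⟨Submodule.smul_mem _ _ hp1, Submodule.smul_mem _ _ hp2, ?_, ?_⟩ <;>
      intro z hz <;> simp only [Prod.smul_fst, Prod.smul_snd, eval_smul, smul_eq_mul]
    · linear_combination c * hp3 z hz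
    · linear_combination c * hp4 z hz

/-- The even polynomials of degree `≤ n`. -/
noncomputable def EvenPolys (n : ℕ) : Submodule ℂ ℂ[X] where
  carrier := {φ | φ ∈ degreeLT ℂ (n + 1) ∧ ∀ z : ℂ, φ.eval (-z) = φ.eval z}
  zero_mem' := ⟨Submodule.zero_mem _, by simp⟩
  add_mem' := by
    rintro p q ⟨hp1, hp2⟩ ⟨hq1, hq2⟩
    exact ⟨Submodule.add_mem _ hp1 hq1, fun z => by simp [eval_add, hp2 z, hq2 z]⟩
  smul_mem' := by
    rintro c p ⟨hp1, hp2⟩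
    exact ⟨Submodule.smul_mem _ _ hp1, fun z => by simp [eval_smul, hp2 z]⟩

namespace SolDim

noncomputable def Dop (p : ℂ[X]) : ℂ[X] := p.comp (X - C 1) - p.comp (X + C 1)

lemma Dop_eval (p : ℂ[X]) (z : ℂ) : (Dop p).eval z = p.eval (z - 1) - p.eval (z + 1) := by
  simp [Dop, eval_comp]

lemma Dop_add (p q : ℂ[X]) : Dop (p + q) = Dop p + Dop q := by
  simp only [Dop, add_comp]; ring

lemma Dop_sub (p q : ℂ[X]) : Dop (p - q) = Dop p - Dop q := by
  simp only [Dop, sub_comp]; ring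

lemma Dop_smul (a : ℂ) (p : ℂ[X]) : Dop (a • p) = a • Dop p := by
  simp only [Dop, smul_comp, smul_sub]

lemma Dop_C (a : ℂ) : Dop (C a) = 0 := by simp [Dop]

lemma ext_ne_zero {P Q : ℂ[X]} (h : ∀ z : ℂ, z ≠ 0 → P.eval z = Q.eval z) : P = Q := by
  apply Polynomial.eq_of_infinite_eval_eq
  apply Set.Infinite.mono (s := ({0}ᶜ : Set ℂ)) ?_ ((Set.finite_singleton 0).infinite_compl)
  intro z hz
  exact h z hz

lemma Dop_eq_zero {p : ℂ[X]} (h : Dop p = 0) : p = C (p.coeff 0) := by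
  have hper : ∀ z : ℂ, p.eval z = p.eval (z + 2) := by
    intro z
    have h2 := congrArg (eval (z + 1)) h
    rw [Dop_eval] at h2
    have : p.eval (z + 1 - 1) - p.eval (z + 1 + 1) = 0 := by simpa using h2
    have e1 : z + 1 - 1 = z := by ring
    have e2 : z + 1 + 1 = z + 2 := by ring
    rw [e1, e2] at this
    exact sub_eq_zero.mp this
  have hroot : ∀ k : ℕ, p.eval ((2 * k : ℕ) : ℂ) = p.eval 0 := by
    intro k
    induction k with
    | zero => simp
    | succ m ih =>
      have := hper ((2 * m : ℕ) : ℂ)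
      push_cast at this ih ⊢
      rw [show (2 : ℂ) * (m + 1) = 2 * m + 2 by ring, ← this, ih]
  have hq : p - C (p.eval 0) = 0 := by
    apply Polynomial.eq_zero_of_infinite_isRoot
    apply Set.Infinite.mono (s := Set.range (fun k : ℕ => ((2 * k : ℕ) : ℂ)))
    · rintro x ⟨k, rfl⟩
      simp only [Set.mem_setOf_eq, IsRoot.def, eval_sub, eval_C, hroot k, sub_self]
    · apply Set.infinite_range_of_injective
      intro a b hab
      have : (2 * a : ℕ) = (2 * b : ℕ) := Nat.cast_injective hab
      omega
  rw [coeff_zero_eq_eval_zero]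
  linear_combination hq


lemma natDegree_le_of_mem {p : ℂ[X]} {m : ℕ} (h : p ∈ degreeLT ℂ (m + 1)) :
    p.natDegree ≤ m := by
  rcases eq_or_ne p 0 with rfl | hp
  · simp
  · exact Nat.lt_succ_iff.mp ((natDegree_lt_iff_degree_lt hp).mpr (mem_degreeLT.mp h))

lemma Dop_mem {n : ℕ} {p : ℂ[X]} (hp : p ∈ degreeLT ℂ (n + 1)) : Dop p ∈ degreeLT ℂ n := by
  rcases eq_or_ne p 0 with rfl | hp0
  · simp only [Dop, zero_comp, sub_zero]
    exact Submodule.zero_mem _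
  rcases Nat.eq_zero_or_pos p.natDegree with h0 | hpos
  · obtain ⟨a, rfl⟩ := natDegree_eq_zero.mp h0
    rw [Dop_C]; exact Submodule.zero_mem _
  have hd1 : ((X : ℂ[X]) - C 1).natDegree = 1 := natDegree_X_sub_C 1
  have hd2 : ((X : ℂ[X]) + C 1).natDegree = 1 := natDegree_X_add_C 1
  have hn1 : (p.comp (X - C 1)).natDegree = p.natDegree := by
    rw [natDegree_comp, hd1, mul_one]
  have hn2 : (p.comp (X + C 1)).natDegree = p.natDegree := by
    rw [natDegree_comp, hd2, mul_one]
  have hne1 : p.comp (X - C 1) ≠ 0 := by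
    intro h; rw [h, natDegree_zero] at hn1; omega
  have hne2 : p.comp (X + C 1) ≠ 0 := by
    intro h; rw [h, natDegree_zero] at hn2; omega
  have hdeg : (p.comp (X - C 1)).degree = (p.comp (X + C 1)).degree := by
    rw [degree_eq_natDegree hne1, degree_eq_natDegree hne2, hn1, hn2]
  have hlc : (p.comp (X - C 1)).leadingCoeff = (p.comp (X + C 1)).leadingCoeff := by
    rw [leadingCoeff_comp (by rw [hd1]; omega), leadingCoeff_comp (by rw [hd2]; omega)]
    rw [(monic_X_sub_C (1 : ℂ)).leadingCoeff, (monic_X_add_C (1 : ℂ)).leadingCoeff]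
  have hlt := degree_sub_lt hdeg hne1 hlc
  rw [mem_degreeLT]
  refine lt_of_lt_of_le hlt ?_
  rw [degree_eq_natDegree hne1, hn1]
  exact_mod_cast natDegree_le_of_mem hp

noncomputable def Dlin (n : ℕ) : degreeLT ℂ (n + 1) →ₗ[ℂ] degreeLT ℂ n where
  toFun p := ⟨Dop p.1, Dop_mem p.2⟩
  map_add' p q := Subtype.ext (Dop_add p.1 q.1)
  map_smul' a p := Subtype.ext (Dop_smul a p.1)

noncomputable instance (m : ℕ) : FiniteDimensional ℂ (degreeLT ℂ m) :=
  Module.Finite.equiv (degreeLTEquiv ℂ m).symm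

lemma finrank_degreeLT (m : ℕ) : Module.finrank ℂ (degreeLT ℂ m) = m := by
  rw [(degreeLTEquiv ℂ m).finrank_eq]
  exact Module.finrank_fin_fun ℂ

lemma C_mem_degreeLT (a : ℂ) (m : ℕ) : C a ∈ degreeLT ℂ (m + 1) := by
  rw [mem_degreeLT]
  exact lt_of_le_of_lt degree_C_le (by exact_mod_cast Nat.succ_pos m)

lemma Dlin_ker (n : ℕ) :
    LinearMap.ker (Dlin n) = Submodule.span ℂ {(⟨C 1, C_mem_degreeLT 1 n⟩ : degreeLT ℂ (n + 1))} := by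
  ext x
  rw [LinearMap.mem_ker, Submodule.mem_span_singleton]
  constructor
  · intro h
    have h0 : Dop x.1 = 0 := congrArg Subtype.val h
    refine ⟨x.1.coeff 0, Subtype.ext ?_⟩
    have := Dop_eq_zero h0
    simp only [SetLike.mk_smul_mk]
    rw [this, smul_eq_C_mul]
    simp
  · rintro ⟨a, rfl⟩
    apply Subtype.ext
    show Dop ((a • (⟨C 1, C_mem_degreeLT 1 n⟩ : degreeLT ℂ (n + 1)) : degreeLT ℂ (n+1)) : ℂ[X]) = 0
    rw [show ((a • (⟨C 1, C_mem_degreeLT 1 n⟩ : degreeLT ℂ (n + 1)) : degreeLT ℂ (n+1)) : ℂ[X]) = a • C 1 from rfl]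
    rw [Dop_smul, Dop_C, smul_zero]

lemma Dlin_surj (n : ℕ) : Function.Surjective (Dlin n) := by
  rw [← LinearMap.range_eq_top]
  apply Submodule.eq_top_of_finrank_eq
  have hrn := LinearMap.finrank_range_add_finrank_ker (Dlin n)
  rw [Dlin_ker, finrank_span_singleton, finrank_degreeLT] at hrn
  · rw [finrank_degreeLT]
    omega
  · intro h
    have := congrArg Subtype.val h
    simp only [Submodule.coe_zero] at this
    exact one_ne_zero (α := ℂ[X]) (by rwa [C_1] at this)


lemma reflect_reflect (N : ℕ) (f : ℂ[X]) : reflect N (reflect N f) = f := by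
  ext i
  simp [coeff_reflect, revAt_invol]

lemma eval_reflect {N : ℕ} {f : ℂ[X]} (hf : f.natDegree ≤ N) {z : ℂ} (hz : z ≠ 0) :
    (reflect N f).eval z = z ^ N * f.eval z⁻¹ := by
  haveI : Invertible (z⁻¹) := invertibleOfNonzero (inv_ne_zero hz)
  have h := eval₂_reflect_mul_pow (RingHom.id ℂ) (z⁻¹) N f hf
  have hinv : (⅟(z⁻¹) : ℂ) = z := by rw [invOf_eq_inv, inv_inv]
  rw [hinv] at h
  have h1 : (reflect N f).eval z * (z⁻¹) ^ N = f.eval z⁻¹ := h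
  have hzn : z ^ N ≠ 0 := pow_ne_zero _ hz
  field_simp at h1
  rw [← one_div, ← h1, one_div, inv_pow, mul_left_comm, mul_inv_cancel₀ hzn]
  ring

lemma even_comp_iff {p : ℂ[X]} : p.comp (-X) = p ↔ ∀ z : ℂ, p.eval (-z) = p.eval z := by
  constructor
  · intro h z
    conv_rhs => rw [← h]
    simp [eval_comp]
  · intro h
    apply Polynomial.funext
    intro z
    rw [eval_comp]
    simpa using h z

lemma comp_neg_neg (p : ℂ[X]) : (p.comp (-X)).comp (-X) = p := by
  rw [comp_assoc]
  simp [neg_comp]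

lemma even_comp {v : ℂ[X]} (hv : v.comp (-X) = v) (q : ℂ[X]) : v.comp (-q) = v.comp q := by
  have h : (v.comp (-X)).comp q = v.comp (-q) := by
    rw [comp_assoc]
    simp [neg_comp]
  rw [hv] at h
  exact h.symm

lemma odd_Dop {v : ℂ[X]} (hv : v.comp (-X) = v) : (Dop v).comp (-X) = -(Dop v) := by
  have e1 : ((X : ℂ[X]) - C 1).comp (-X) = -(X + C 1) := by
    simp [sub_comp]
    ring
  have e2 : ((X : ℂ[X]) + C 1).comp (-X) = -(X - C 1) := by
    simp [add_comp]
    ring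
  simp only [Dop]
  rw [sub_comp, comp_assoc, comp_assoc, e1, e2, even_comp hv, even_comp hv]
  ring

lemma Dop_comp_neg (u : ℂ[X]) : (Dop u).comp (-X) = -(Dop (u.comp (-X))) := by
  have a1 : ((X : ℂ[X]) - C 1).comp (-X) = -X - C 1 := by simp [sub_comp]
  have a2 : ((X : ℂ[X]) + C 1).comp (-X) = -X + C 1 := by simp [add_comp]
  have a3 : ((-X : ℂ[X])).comp (X - C 1) = -X + C 1 := by
    simp [neg_comp]
    ring
  have a4 : ((-X : ℂ[X])).comp (X + C 1) = -X - C 1 := by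
    simp [neg_comp]
    ring
  simp only [Dop]
  rw [sub_comp, comp_assoc, comp_assoc, comp_assoc, comp_assoc, a1, a2, a3, a4]
  ring

lemma even_of_Dop_eq {u : ℂ[X]} (h : Dop (u.comp (-X)) = Dop u) : u.comp (-X) = u := by
  have h3 : Dop (u.comp (-X) - u) = 0 := by rw [Dop_sub, h, sub_self]
  have h4 := Dop_eq_zero h3
  have h5 := congrArg (fun p : ℂ[X] => p.comp (-X)) h4
  simp only [sub_comp, comp_neg_neg, C_comp] at h5
  have h6 : (2 : ℂ[X]) * C ((u.comp (-X) - u).coeff 0) = 0 := by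
    linear_combination - h4 - h5
  have h7 : C ((u.comp (-X) - u).coeff 0) = 0 := by
    rcases mul_eq_zero.mp h6 with h | h
    · exact absurd h (by norm_num)
    · exact h
  rw [h7] at h4
  exact sub_eq_zero.mp h4

lemma even_of_Dop_odd {u : ℂ[X]} (h : (Dop u).comp (-X) = -(Dop u)) : u.comp (-X) = u := by
  apply even_of_Dop_eq
  have h2 := Dop_comp_neg u
  rw [h] at h2
  exact (neg_injective h2).symm


noncomputable def Eop (n : ℕ) (v : ℂ[X]) : ℂ[X] :=
  reflect n (v.comp (C 1 - X)) - reflect n (v.comp (X + C 1))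

lemma natDegree_comp_linear_le {v : ℂ[X]} {n : ℕ} (hv : v.natDegree ≤ n) {q : ℂ[X]}
    (hq : q.natDegree = 1) : (v.comp q).natDegree ≤ n := by
  rw [natDegree_comp, hq, mul_one]
  exact hv

lemma natDegree_C_one_sub : ((C 1 - X : ℂ[X])).natDegree = 1 := by
  rw [show (C 1 - X : ℂ[X]) = -(X - C 1) by ring, natDegree_neg, natDegree_X_sub_C]

lemma Eop_eval {n : ℕ} {v : ℂ[X]} (hv : v.natDegree ≤ n) {z : ℂ} (hz : z ≠ 0) :
    (Eop n v).eval z = z ^ n * (-v.eval ((z + 1) / z) + v.eval ((z - 1) / z)) := by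
  have h1 : (v.comp (C 1 - X)).natDegree ≤ n := natDegree_comp_linear_le hv natDegree_C_one_sub
  have h2 : (v.comp (X + C 1)).natDegree ≤ n := natDegree_comp_linear_le hv (natDegree_X_add_C 1)
  rw [Eop, eval_sub, eval_reflect h1 hz, eval_reflect h2 hz, eval_comp, eval_comp]
  rw [show (z + 1) / z = z⁻¹ + 1 by field_simp; ring, show (z - 1) / z = 1 - z⁻¹ by field_simp]
  simp only [eval_sub, eval_add, eval_C, eval_X]
  ring

lemma eq1_iff {n : ℕ} {u v : ℂ[X]} (hv : v.natDegree ≤ n) :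
    (∀ z : ℂ, z ≠ 0 → u.eval (z - 1) - u.eval (z + 1) =
      z ^ n * (-v.eval ((z + 1) / z) + v.eval ((z - 1) / z))) ↔ Dop u = Eop n v := by
  constructor
  · intro h
    apply ext_ne_zero
    intro z hz
    rw [Dop_eval, Eop_eval hv hz]
    exact h z hz
  · intro h z hz
    rw [← Dop_eval, h, Eop_eval hv hz]

lemma Eop_even {n : ℕ} {v : ℂ[X]} (hv : v.comp (-X) = v) : Eop n v = reflect n (Dop v) := by
  rw [Eop, Dop, reflect_sub]
  congr 2
  rw [show (C 1 - X : ℂ[X]) = -(X - C 1) by ring, even_comp hv]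

lemma sol_even {n : ℕ} (hn : Even n) {u v : ℂ[X]}
    (h3 : ∀ z : ℂ, z ≠ 0 → u.eval (z - 1) - u.eval (z + 1) =
      z ^ n * (-v.eval ((z + 1) / z) + v.eval ((z - 1) / z))) :
    u.comp (-X) = u := by
  apply even_of_Dop_eq
  apply ext_ne_zero
  intro z hz
  have hz' : -z ≠ 0 := neg_ne_zero.mpr hz
  have h1 := h3 z hz
  have h2 := h3 (-z) hz'
  rw [show (-z + 1) / (-z) = (z - 1) / z by rw [div_eq_div_iff hz' hz]; ring,
    show (-z - 1) / (-z) = (z + 1) / z by rw [div_eq_div_iff hz' hz]; ring,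
    Even.neg_pow hn] at h2
  rw [Dop_eval, Dop_eval]
  simp only [eval_comp, eval_neg, eval_X]
  rw [show -(z - 1) = -z + 1 by ring, show -(z + 1) = -z - 1 by ring]
  linear_combination - h1 - h2

lemma reflect_odd {n : ℕ} (hn : Even n) {p : ℂ[X]} (hp : p.comp (-X) = -p)
    (hdeg : p.natDegree ≤ n) : (reflect n p).comp (-X) = -(reflect n p) := by
  apply ext_ne_zero
  intro z hz
  have hz' : -z ≠ 0 := neg_ne_zero.mpr hz
  rw [eval_comp]
  simp only [eval_neg, eval_X]
  rw [eval_reflect hdeg hz', eval_reflect hdeg hz, Even.neg_pow hn]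
  have h1 : p.eval (-z)⁻¹ = -p.eval z⁻¹ := by
    have h2 := congrArg (eval z⁻¹) hp
    rw [eval_comp] at h2
    simp only [eval_neg, eval_X] at h2
    rw [show (-z)⁻¹ = -z⁻¹ by rw [inv_neg]]
    exact h2
  rw [h1]
  ring

lemma reflect_Dop_mem {n : ℕ} {v : ℂ[X]} (hv : v ∈ degreeLT ℂ (n + 1))
    (hev : ∀ z : ℂ, v.eval (-z) = v.eval z) : reflect n (Dop v) ∈ degreeLT ℂ n := by
  rw [mem_degreeLT]
  rw [degree_lt_iff_coeff_zero]
  intro m hm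
  have hm' : n ≤ m := by exact_mod_cast hm
  rw [coeff_reflect]
  rcases eq_or_lt_of_le hm' with rfl | hlt
  · rw [revAt_le le_rfl, Nat.sub_self, coeff_zero_eq_eval_zero, Dop_eval]
    rw [show (0 : ℂ) - 1 = -1 by ring, zero_add, hev 1, sub_self]
  · rw [revAt_eq_self_of_lt hlt]
    apply coeff_eq_zero_of_degree_lt
    exact lt_of_lt_of_le (mem_degreeLT.mp (Dop_mem hv)) (by exact_mod_cast hlt.le)


lemma coeff_comp_neg (p : ℂ[X]) (k : ℕ) : (p.comp (-X)).coeff k = (-1) ^ k * p.coeff k := by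
  induction p using Polynomial.induction_on' with
  | add p q hp hq => simp only [add_comp, coeff_add, hp, hq]; ring
  | monomial m a =>
    rw [← C_mul_X_pow_eq_monomial, mul_comp, C_comp, pow_comp, X_comp]
    rw [show ((-X : ℂ[X])) ^ m = C ((-1 : ℂ) ^ m) * X ^ m by
      rw [neg_pow, map_pow, map_neg, map_one]]
    rw [show C a * (C ((-1 : ℂ) ^ m) * X ^ m) = C ((-1 : ℂ) ^ m * a) * X ^ m by
      rw [map_mul]; ring]
    rw [C_mul_X_pow_eq_monomial, coeff_monomial, coeff_C_mul, coeff_X_pow]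
    by_cases h : m = k
    · subst h
      simp
    · rw [if_neg h, if_neg (fun hc => h hc.symm)]
      ring

-- here SOLSPACE-dependent lemmas
lemma sol_mem_iff {n : ℕ} (u v : ℂ[X]) : (u, v) ∈ SolSpace n ↔
    (u ∈ degreeLT ℂ (n + 1) ∧ v ∈ degreeLT ℂ (n + 1) ∧
    (∀ z : ℂ, z ≠ 0 → u.eval (z - 1) - u.eval (z + 1) =
      z ^ n * (-v.eval ((z + 1) / z) + v.eval ((z - 1) / z))) ∧
    (∀ z : ℂ, z ≠ 0 → v.eval (z - 1) - v.eval (z + 1) =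
      z ^ n * (-u.eval ((z + 1) / z) + u.eval ((z - 1) / z)))) := Iff.rfl

lemma exists_sol {n : ℕ} (hn : Even n) {v : ℂ[X]} (hv : v ∈ degreeLT ℂ (n + 1))
    (hev : ∀ z : ℂ, v.eval (-z) = v.eval z) (c : ℂ) :
    ∃ u : ℂ[X], (u, v) ∈ SolSpace n ∧ u.coeff 0 = c := by
  obtain ⟨U, hU⟩ := Dlin_surj n ⟨reflect n (Dop v), reflect_Dop_mem hv hev⟩
  have hDu0 : Dop (U : ℂ[X]) = reflect n (Dop v) := congrArg Subtype.val hU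
  set u : ℂ[X] := (U : ℂ[X]) - C ((U : ℂ[X]).coeff 0) + C c with hu
  have hDu : Dop u = reflect n (Dop v) := by
    rw [hu, Dop_add, Dop_sub, Dop_C, Dop_C, sub_zero, add_zero, hDu0]
  have hvcomp : v.comp (-X) = v := even_comp_iff.mpr hev
  have hvdeg : v.natDegree ≤ n := natDegree_le_of_mem hv
  have hDvdeg : (Dop v).natDegree ≤ n :=
    natDegree_le_of_mem (degreeLT_mono (Nat.le_succ n) (Dop_mem hv))
  have hDvodd : (Dop v).comp (-X) = -(Dop v) := odd_Dop hvcomp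
  have hqodd : (Dop u).comp (-X) = -(Dop u) := by
    rw [hDu]; exact reflect_odd hn hDvodd hDvdeg
  have hucomp : u.comp (-X) = u := even_of_Dop_odd hqodd
  have humem : u ∈ degreeLT ℂ (n + 1) := by
    rw [hu]
    exact Submodule.add_mem _ (Submodule.sub_mem _ U.2 (C_mem_degreeLT _ n)) (C_mem_degreeLT _ n)
  have hudeg : u.natDegree ≤ n := natDegree_le_of_mem humem
  refine ⟨u, (sol_mem_iff u v).mpr ⟨humem, hv, ?_, ?_⟩, ?_⟩
  · exact (eq1_iff hvdeg).mpr (by rw [hDu, Eop_even hvcomp])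
  · refine (eq1_iff hudeg).mpr ?_
    rw [Eop_even hucomp, hDu, reflect_reflect]
  · rw [hu]
    simp [coeff_add, coeff_sub, coeff_C]

lemma sol_v_zero {n : ℕ} {u : ℂ[X]} (h : (u, (0 : ℂ[X])) ∈ SolSpace n)
    (h0 : u.coeff 0 = 0) : u = 0 := by
  obtain ⟨h1, h2, h3, h4⟩ := (sol_mem_iff u 0).mp h
  have hD : Dop u = 0 := by
    apply ext_ne_zero
    intro z hz
    rw [Dop_eval, eval_zero]
    simpa using h3 z hz
  have := Dop_eq_zero hD
  rw [h0] at this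
  simpa using this

/-- Coefficient extraction map on even polynomials. -/
noncomputable def evenCoeff (n : ℕ) : EvenPolys n →ₗ[ℂ] (Fin (n / 2 + 1) → ℂ) where
  toFun p i := (p : ℂ[X]).coeff (2 * (i : ℕ))
  map_add' p q := by
    funext i
    show (↑p + ↑q : ℂ[X]).coeff _ = _
    rw [coeff_add]
    rfl
  map_smul' a p := by
    funext i
    show (a • (p : ℂ[X])).coeff _ = _
    rw [coeff_smul]
    rfl

lemma evenCoeff_bijective {n : ℕ} (hn : Even n) : Function.Bijective (evenCoeff n) := by
  obtain ⟨r, rfl⟩ : ∃ r, n = 2 * r := by obtain ⟨r, rfl⟩ := hn; exact ⟨r, by ring⟩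
  have hhalf : 2 * r / 2 = r := by omega
  constructor
  · intro p q hpq
    apply Subtype.ext
    ext k
    obtain ⟨p, hp1, hp2⟩ := p
    obtain ⟨q, hq1, hq2⟩ := q
    show p.coeff k = q.coeff k
    rcases Nat.even_or_odd k with ⟨t, ht⟩ | hodd
    · have ht2 : k = 2 * t := by omega
      subst ht2
      by_cases htr : t ≤ r
      · have := congrFun hpq ⟨t, by omega⟩
        simpa [evenCoeff, hhalf] using this
      · have hk : 2 * r < 2 * t := by omega
        rw [coeff_eq_zero_of_degree_lt (lt_of_lt_of_le (mem_degreeLT.mp hp1) (by exact_mod_cast hk)),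
          coeff_eq_zero_of_degree_lt (lt_of_lt_of_le (mem_degreeLT.mp hq1) (by exact_mod_cast hk))]
    · have hodd' : ∀ (w : ℂ[X]), (∀ z : ℂ, w.eval (-z) = w.eval z) → w.coeff k = 0 := by
        intro w hw
        have hc := coeff_comp_neg w k
        rw [even_comp_iff.mpr hw, hodd.neg_one_pow] at hc
        have : (2 : ℂ) * w.coeff k = 0 := by linear_combination hc
        rcases mul_eq_zero.mp this with h | h
        · norm_num at h
        · exact h
      rw [hodd' p hp2, hodd' q hq2]
  · intro c
    set p : ℂ[X] := ∑ i : Fin (2 * r / 2 + 1), monomial (2 * (i : ℕ)) (c i) with hp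
    have hmem : p ∈ degreeLT ℂ (2 * r + 1) := by
      rw [hp]
      apply Submodule.sum_mem
      intro i _
      rw [mem_degreeLT]
      refine lt_of_le_of_lt (degree_monomial_le _ _) ?_
      have : 2 * (i : ℕ) ≤ 2 * r := by have := i.isLt; omega
      exact_mod_cast Nat.lt_succ_of_le this
    have heven : ∀ z : ℂ, p.eval (-z) = p.eval z := by
      intro z
      rw [hp]
      simp only [eval_finset_sum, eval_monomial]
      congr 1
      funext i
      rw [show (-z) ^ (2 * (i : ℕ)) = z ^ (2 * (i : ℕ)) from Even.neg_pow (even_two_mul _) z]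
    refine ⟨⟨p, hmem, heven⟩, ?_⟩
    funext i
    show p.coeff (2 * (i : ℕ)) = c i
    rw [hp, finset_sum_coeff]
    rw [Finset.sum_eq_single i]
    · rw [coeff_monomial, if_pos rfl]
    · intro j _ hji
      rw [coeff_monomial, if_neg]
      intro hcon
      exact hji (Fin.ext (by omega))
    · intro hcon
      exact absurd (Finset.mem_univ i) hcon

theorem evenFD {n : ℕ} (hn : Even n) : FiniteDimensional ℂ (EvenPolys n) :=
  Module.Finite.equiv (LinearEquiv.ofBijective (evenCoeff n) (evenCoeff_bijective hn)).symm

/-- The solution-to-(even polynomial, constant) linear map. -/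
noncomputable def solToPair (n : ℕ) (hn : Even n) : SolSpace n →ₗ[ℂ] EvenPolys n × ℂ where
  toFun x := (⟨x.1.2, x.2.2.1,
      even_comp_iff.mp (sol_even hn x.2.2.2.2)⟩, x.1.1.coeff 0)
  map_add' x y := by
    refine Prod.ext (Subtype.ext rfl) ?_
    show ((x : ℂ[X] × ℂ[X]).1 + (y : ℂ[X] × ℂ[X]).1).coeff 0 = _
    rw [coeff_add]
    rfl
  map_smul' a x := by
    refine Prod.ext (Subtype.ext rfl) ?_
    show (a • (x : ℂ[X] × ℂ[X]).1).coeff 0 = _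
    rw [coeff_smul]
    rfl

lemma solToPair_bijective (n : ℕ) (hn : Even n) : Function.Bijective (solToPair n hn) := by
  constructor
  · intro x y hxy
    have h0 : solToPair n hn (x - y) = 0 := by rw [map_sub, hxy, sub_self]
    have hv : ((x - y : SolSpace n) : ℂ[X] × ℂ[X]).2 = 0 := by
      have := congrArg (fun w => ((Prod.fst w : EvenPolys n) : ℂ[X])) h0
      exact this
    have hc : ((x - y : SolSpace n) : ℂ[X] × ℂ[X]).1.coeff 0 = 0 :=
      congrArg Prod.snd h0
    have hmem := (x - y).2
    rw [show ((x - y : SolSpace n) : ℂ[X] × ℂ[X]) =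
      (((x - y : SolSpace n) : ℂ[X] × ℂ[X]).1, ((x - y : SolSpace n) : ℂ[X] × ℂ[X]).2) from rfl,
      hv] at hmem
    have hu0 := sol_v_zero hmem hc
    have : ((x - y : SolSpace n) : ℂ[X] × ℂ[X]) = 0 := Prod.ext hu0 hv
    have hxy0 : x - y = 0 := Subtype.ext this
    exact sub_eq_zero.mp hxy0
  · rintro ⟨⟨v, hv1, hv2⟩, c⟩
    obtain ⟨u, hmem, hc⟩ := exists_sol hn hv1 hv2 c
    refine ⟨⟨(u, v), hmem⟩, ?_⟩
    exact Prod.ext (Subtype.ext rfl) hc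


end SolDim

/-- For `n` even the solution space of the system has dimension `n/2 + 2`;
moreover both components of any solution are even polynomials, and the solution
space is isomorphic to `𝒫_n^even × ℂ`. -/
theorem solSpace_dim (n : ℕ) (hn : Even n) :
    Module.finrank ℂ (SolSpace n) = n / 2 + 2 ∧
    (∀ φ ∈ SolSpace n, (∀ z : ℂ, φ.1.eval (-z) = φ.1.eval z) ∧
      (∀ z : ℂ, φ.2.eval (-z) = φ.2.eval z)) ∧
    Nonempty ((SolSpace n) ≃ₗ[ℂ] (EvenPolys n × ℂ)) := by
  haveI : FiniteDimensional ℂ (EvenPolys n) := SolDim.evenFD hn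
  set e := LinearEquiv.ofBijective (SolDim.solToPair n hn) (SolDim.solToPair_bijective n hn)
  haveI : FiniteDimensional ℂ (SolSpace n) := Module.Finite.equiv e.symm
  refine ⟨?_, ?_, ⟨e⟩⟩
  · rw [e.finrank_eq, Module.finrank_prod,
      (LinearEquiv.ofBijective (SolDim.evenCoeff n) (SolDim.evenCoeff_bijective hn)).finrank_eq,
      Module.finrank_fin_fun, Module.finrank_self]
  · intro φ hφ
    obtain ⟨h1, h2, h3, h4⟩ := hφ
    exact ⟨SolDim.even_comp_iff.mp (SolDim.sol_even hn h3),
      SolDim.even_comp_iff.mp (SolDim.sol_even hn h4)⟩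
end

section
/- Let n be even and λ ∈ {+1, −1}. A triple (φ₁, φ₂, φ₃) ∈ 𝒫 × 𝒫 × 𝒫 of polynomials satisfies the Lewis system λ(φ₁(z) − φ₃(z+1)) = zⁿφ₃((z+1)/z), λ(φ₂(z) − φ₂(z+1)) = zⁿφ₁((z+1)/z), λ(φ₃(z) − φ₁(z+1)) = zⁿφ₂((z+1)/z) if and only if φ₃(z) = λ zⁿ φ₂(1/z), φ₁(z) = λ(z−1)ⁿ(φ₂(1/(z−1)) − φ₂(z/(z−1))), and φ₂ satisfies the single functional equation φ₂(z) − φ₂(z+1) = (2z+1)ⁿ(λφ₂((z+1)/(2z+1)) + φ₂(z/(2z+1))). -/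
open Polynomial

lemma evalLT {n : ℕ} {p : ℂ[X]} (hp : p ∈ degreeLT ℂ (n+2)) (x : ℂ) :
    p.eval x = ∑ k ∈ Finset.range (n+2), p.coeff k * x^k := by
  apply Polynomial.eval_eq_sum_range'
  rcases eq_or_ne p 0 with rfl | hp0
  · simp
  · exact (Polynomial.natDegree_lt_iff_degree_lt hp0).mpr (Polynomial.mem_degreeLT.mp hp)

noncomputable def sl (n : ℕ) (p : ℂ[X]) (a b c d : ℂ) : ℂ[X] :=
  ∑ k ∈ Finset.range (n+2), C (p.coeff k) * (C a * X + C b)^k * (C c * X + C d)^(n+1-k)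

lemma sl_eval {n : ℕ} {p : ℂ[X]} (hp : p ∈ degreeLT ℂ (n+2)) (a b c d z : ℂ)
    (h : c*z+d ≠ 0) :
    (sl n p a b c d).eval z = (c*z+d)^(n+1) * p.eval ((a*z+b)/(c*z+d)) := by
  rw [sl, Polynomial.eval_finset_sum, evalLT hp, Finset.mul_sum]
  refine Finset.sum_congr rfl fun k hk => ?_
  have hk' : k ≤ n+1 := Nat.lt_succ_iff.mp (Finset.mem_range.mp hk)
  simp only [Polynomial.eval_mul, Polynomial.eval_pow, Polynomial.eval_add,
    Polynomial.eval_C, Polynomial.eval_X]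
  have hsplit : (c*z+d)^(n+1) = (c*z+d)^(n+1-k) * (c*z+d)^k := by
    rw [← pow_add, Nat.sub_add_cancel hk']
  rw [hsplit, div_pow]
  have hck : (c*z+d)^k ≠ 0 := pow_ne_zero _ h
  have hinv : (c*z+d)^k * ((c*z+d)^k)⁻¹ = 1 := mul_inv_cancel₀ hck
  linear_combination (-(p.coeff k * (a*z+b)^k * (c*z+d)^(n+1-k))) * hinv

lemma eq_of_eval_off_finset (F G : ℂ[X]) (s : Finset ℂ)
    (h : ∀ z : ℂ, z ∉ s → F.eval z = G.eval z) : F = G := by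
  apply Polynomial.eq_of_infinite_eval_eq
  exact ((s.finite_toSet).infinite_compl).mono (fun z hz => h z (by simpa using hz))

lemma mpd {n : ℕ} {x u w L : ℂ} (hx : x ≠ 0) (h : L = (u/x)^n * w) :
    x^n * L = u^n * w := by
  have key : x * (u/x) = u := by field_simp
  have hu : x^n * (u/x)^n = u^n := by rw [← mul_pow, key]
  rw [h, ← hu]; ring

lemma mpdc {n : ℕ} {x u w c L : ℂ} (hx : x ≠ 0) (h : L = c * (u/x)^n * w) :
    x^n * L = c * (u^n * w) := by
  have key : x * (u/x) = u := by field_simp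
  have hu : x^n * (u/x)^n = u^n := by rw [← mul_pow, key]
  rw [h, ← hu]; ring


/-- For `n` even and `λ = ±1`, a triple `(φ₁, φ₂, φ₃)` of polynomials of degree
`≤ n+1` satisfies the Lewis system for `Γ₀(2)`
`λ(φ₁(z) − φ₃(z+1)) = zⁿφ₃((z+1)/z)`,
`λ(φ₂(z) − φ₂(z+1)) = zⁿφ₁((z+1)/z)`,
`λ(φ₃(z) − φ₁(z+1)) = zⁿφ₂((z+1)/z)`
if and only if `φ₃(z) = λzⁿφ₂(1/z)`,
`φ₁(z) = λ(z−1)ⁿ(φ₂(1/(z−1)) − φ₂(z/(z−1)))`, and `φ₂` satisfies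
`φ₂(z) − φ₂(z+1) = (2z+1)ⁿ(λφ₂((z+1)/(2z+1)) + φ₂(z/(2z+1)))`
(all as identities of rational functions). -/
theorem lewis_system_gamma0_two (n : ℕ) (hn : Even n) (lam : ℂ)
    (hlam : lam = 1 ∨ lam = -1) (φ₁ φ₂ φ₃ : ℂ[X])
    (h₁ : φ₁ ∈ degreeLT ℂ (n + 2)) (h₂ : φ₂ ∈ degreeLT ℂ (n + 2))
    (h₃ : φ₃ ∈ degreeLT ℂ (n + 2)) :
    ((∀ z : ℂ, z ≠ 0 →
        lam * (φ₁.eval z - φ₃.eval (z + 1)) = z ^ n * φ₃.eval ((z + 1) / z)) ∧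
     (∀ z : ℂ, z ≠ 0 →
        lam * (φ₂.eval z - φ₂.eval (z + 1)) = z ^ n * φ₁.eval ((z + 1) / z)) ∧
     (∀ z : ℂ, z ≠ 0 →
        lam * (φ₃.eval z - φ₁.eval (z + 1)) = z ^ n * φ₂.eval ((z + 1) / z)))
    ↔
    ((∀ z : ℂ, z ≠ 0 → φ₃.eval z = lam * z ^ n * φ₂.eval (1 / z)) ∧
     (∀ z : ℂ, z ≠ 1 → φ₁.eval z =
        lam * (z - 1) ^ n * (φ₂.eval (1 / (z - 1)) - φ₂.eval (z / (z - 1)))) ∧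
     (∀ z : ℂ, z ≠ -1/2 → φ₂.eval z - φ₂.eval (z + 1) =
        (2 * z + 1) ^ n *
          (lam * φ₂.eval ((z + 1) / (2 * z + 1)) + φ₂.eval (z / (2 * z + 1))))) := by
  have hl2 : lam * lam = 1 := by rcases hlam with rfl | rfl <;> norm_num
  constructor
  · rintro ⟨hA, hB, hC⟩
    have key1 : ∀ z : ℂ, z ≠ 0 → φ₃.eval z = lam * z ^ n * φ₂.eval (1 / z) := by
      intro z hz
      have h1 := hC z hz
      have h2 := hB (1/z) (one_div_ne_zero hz)
      rw [show (1/z + 1 : ℂ) = (z+1)/z by field_simp; try ring] at h2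
      rw [show ((z+1)/z/(1/z) : ℂ) = z+1 by field_simp; try ring] at h2
      have h2c := mpd hz h2
      rw [one_pow, one_mul] at h2c
      linear_combination lam * h1 - h2c + (φ₁.eval (z+1) - φ₃.eval z) * hl2
    have key2 : ∀ z : ℂ, z ≠ 1 → φ₁.eval z =
        lam * (z - 1) ^ n * (φ₂.eval (1 / (z - 1)) - φ₂.eval (z / (z - 1))) := by
      intro z hz
      have hz1 : z - 1 ≠ 0 := sub_ne_zero_of_ne hz
      have h := hB (1/(z-1)) (one_div_ne_zero hz1)
      rw [show (1/(z-1) + 1 : ℂ) = z/(z-1) by field_simp; try ring] at h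
      rw [show ((z/(z-1))/(1/(z-1)) : ℂ) = z by field_simp; try ring] at h
      have hc := mpd hz1 h
      rw [one_pow, one_mul] at hc
      linear_combination -hc
    refine ⟨key1, key2, ?_⟩
    have pw : ∀ z : ℂ, z ≠ 0 → z ≠ -1 → z ≠ -1/2 →
        φ₂.eval z - φ₂.eval (z + 1) =
        (2 * z + 1) ^ n *
          (lam * φ₂.eval ((z + 1) / (2 * z + 1)) + φ₂.eval (z / (2 * z + 1))) := by
      intro z hz hm1 hm2
      have hz1 : z + 1 ≠ 0 := fun h => hm1 (by linear_combination h)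
      have h2z : 2*z+1 ≠ 0 := fun h => hm2 (by linear_combination h/2)
      have hu : (z+1)/z ≠ 0 := div_ne_zero hz1 hz
      have h1 := hA ((z+1)/z) hu
      rw [show ((z+1)/z + 1 : ℂ) = (2*z+1)/z by field_simp; try ring] at h1
      rw [show ((2*z+1)/z/((z+1)/z) : ℂ) = (2*z+1)/(z+1) by field_simp; try ring] at h1
      have h1c := mpd hz h1
      have hu1 : (z+1)/z ≠ 1 := sub_ne_zero.mp (by
        rw [show ((z+1)/z - 1 : ℂ) = 1/z from by field_simp; ring]
        exact one_div_ne_zero hz)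
      have h2 := key2 ((z+1)/z) hu1
      rw [show ((z+1)/z - 1 : ℂ) = 1/z by field_simp; ring] at h2
      rw [one_div_one_div] at h2
      rw [show ((z+1)/z/(1/z) : ℂ) = z+1 by field_simp; try ring] at h2
      have h2c := mpdc hz h2
      rw [one_pow, one_mul] at h2c
      have h3 := key1 ((2*z+1)/z) (div_ne_zero h2z hz)
      rw [one_div_div] at h3
      have h3c := mpdc hz h3
      have h4 := key1 ((2*z+1)/(z+1)) (div_ne_zero h2z hz1)
      rw [one_div_div] at h4
      have h4c := mpdc hz1 h4
      linear_combination h1c - lam * h2c + lam * h3c + h4c +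
        ((2*z+1)^n * φ₂.eval (z/(2*z+1)) - φ₂.eval z + φ₂.eval (z+1)) * hl2
    have hFG : (2*X+1 : ℂ[X]) * (φ₂ - φ₂.comp (X+1)) =
        C lam * sl n φ₂ 1 1 2 1 + sl n φ₂ 1 0 2 1 := by
      apply eq_of_eval_off_finset _ _ {0, -1, -1/2}
      intro z hzs
      simp only [Finset.mem_insert, Finset.mem_singleton] at hzs
      push_neg at hzs
      obtain ⟨hz, hm1, hm2⟩ := hzs
      have h2z : (2:ℂ)*z+1 ≠ 0 := fun h => hm2 (by linear_combination h/2)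
      have hE := pw z hz hm1 hm2
      rw [show ((2*X+1 : ℂ[X]) * (φ₂ - φ₂.comp (X+1))).eval z
          = (2*z+1) * (φ₂.eval z - φ₂.eval (z+1)) from by simp [Polynomial.eval_comp]]
      rw [Polynomial.eval_add, Polynomial.eval_mul, Polynomial.eval_C,
        sl_eval h₂ 1 1 2 1 z h2z, sl_eval h₂ 1 0 2 1 z h2z,
        show ((1:ℂ)*z+1) = z+1 from by ring, show ((1:ℂ)*z+0) = z from by ring]
      linear_combination (2*z+1) * hE
    intro z hm2
    have h2z : (2:ℂ)*z+1 ≠ 0 := fun h => hm2 (by linear_combination h/2)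
    have hev := congrArg (Polynomial.eval z) hFG
    rw [show ((2*X+1 : ℂ[X]) * (φ₂ - φ₂.comp (X+1))).eval z
        = (2*z+1) * (φ₂.eval z - φ₂.eval (z+1)) from by simp [Polynomial.eval_comp]] at hev
    rw [Polynomial.eval_add, Polynomial.eval_mul, Polynomial.eval_C,
      sl_eval h₂ 1 1 2 1 z h2z, sl_eval h₂ 1 0 2 1 z h2z,
      show ((1:ℂ)*z+1) = z+1 from by ring, show ((1:ℂ)*z+0) = z from by ring] at hev
    apply mul_left_cancel₀ h2z
    linear_combination hev
  · rintro ⟨k1, k2, k3⟩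
    have hB' : ∀ z : ℂ, z ≠ 0 →
        lam * (φ₂.eval z - φ₂.eval (z + 1)) = z ^ n * φ₁.eval ((z + 1) / z) := by
      intro z hz
      have hu1 : (z+1)/z ≠ 1 := sub_ne_zero.mp (by
        rw [show ((z+1)/z - 1 : ℂ) = 1/z from by field_simp; ring]
        exact one_div_ne_zero hz)
      have h := k2 ((z+1)/z) hu1
      rw [show ((z+1)/z - 1 : ℂ) = 1/z by field_simp; ring] at h
      rw [one_div_one_div] at h
      rw [show ((z+1)/z/(1/z) : ℂ) = z+1 by field_simp; try ring] at h
      have hc := mpdc hz h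
      rw [one_pow, one_mul] at hc
      exact hc.symm
    have hC' : ∀ z : ℂ, z ≠ 0 →
        lam * (φ₃.eval z - φ₁.eval (z + 1)) = z ^ n * φ₂.eval ((z + 1) / z) := by
      intro z hz
      have h1 := k1 z hz
      have h2 := k2 (z+1) (by intro h; exact hz (by linear_combination h))
      rw [show (z+1-1 : ℂ) = z from by ring] at h2
      linear_combination lam*h1 - lam*h2 + (z^n * φ₂.eval ((z+1)/z)) * hl2
    refine ⟨?_, hB', hC'⟩
    have pw : ∀ z : ℂ, z ≠ 0 → z ≠ 1 → z ≠ -1 →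
        lam * (φ₁.eval z - φ₃.eval (z + 1)) = z ^ n * φ₃.eval ((z + 1) / z) := by
      intro z hz h1' hm1
      have hz1 : z + 1 ≠ 0 := fun h => hm1 (by linear_combination h)
      have hzm : z - 1 ≠ 0 := sub_ne_zero_of_ne h1'
      have h1 := k2 z h1'
      have h2 := k1 (z+1) hz1
      have h4 := k1 ((z+1)/z) (div_ne_zero hz1 hz)
      rw [one_div_div] at h4
      have h4c := mpdc hz h4
      have hw : (1/(z-1) : ℂ) ≠ -1/2 := by
        intro h
        apply hm1
        rw [div_eq_iff hzm] at h
        linear_combination 2*h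
      have h3 := k3 (1/(z-1)) hw
      rw [show (1/(z-1) + 1 : ℂ) = z/(z-1) by field_simp; try ring] at h3
      rw [show (2*(1/(z-1)) + 1 : ℂ) = (z+1)/(z-1) by field_simp; try ring] at h3
      rw [show ((z/(z-1))/((z+1)/(z-1)) : ℂ) = z/(z+1) by field_simp; try ring] at h3
      rw [show ((1/(z-1))/((z+1)/(z-1)) : ℂ) = 1/(z+1) by field_simp; try ring] at h3
      have h3c := mpd hzm h3
      linear_combination lam*h1 - lam*h2 + h3c - h4c +
        ((z-1)^n * (φ₂.eval (1/(z-1)) - φ₂.eval (z/(z-1))) - (z+1)^n * φ₂.eval (1/(z+1))) * hl2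
    have hFG : C lam * (X * (φ₁ - φ₃.comp (X+1))) = sl n φ₃ 1 1 1 0 := by
      apply eq_of_eval_off_finset _ _ {0, 1, -1}
      intro z hzs
      simp only [Finset.mem_insert, Finset.mem_singleton] at hzs
      push_neg at hzs
      obtain ⟨hz, h1', hm1⟩ := hzs
      have hE := pw z hz h1' hm1
      have eFA : (C lam * (X * (φ₁ - φ₃.comp (X+1))) : ℂ[X]).eval z
          = lam * (z * (φ₁.eval z - φ₃.eval (z+1))) := by simp [Polynomial.eval_comp]
      rw [eFA]
      rw [sl_eval h₃ 1 1 1 0 z (by simpa using hz),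
        show ((1:ℂ)*z+1) = z+1 from by ring, show ((1:ℂ)*z+0) = z from by ring]
      linear_combination z * hE
    intro z hz
    have hev := congrArg (Polynomial.eval z) hFG
    have eFA : (C lam * (X * (φ₁ - φ₃.comp (X+1))) : ℂ[X]).eval z
        = lam * (z * (φ₁.eval z - φ₃.eval (z+1))) := by simp [Polynomial.eval_comp]
    rw [eFA] at hev
    rw [sl_eval h₃ 1 1 1 0 z (by simpa using hz),
      show ((1:ℂ)*z+1) = z+1 from by ring, show ((1:ℂ)*z+0) = z from by ring] at hev
    apply mul_left_cancel₀ hz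
    linear_combination hev
end

section
/- Let n be even and let φ be a polynomial of degree ≤ n+1 satisfying φ(z) − φ(z+1) = (2z+1)ⁿ(−φ((z+1)/(2z+1)) + φ(z/(2z+1))). Then φ is an even polynomial. -/
/-!
Put `ψ(z) = φ(-z) - φ(z)`. Adding the functional equation at `z` to the one at `-z - 1` cancels
the right-hand sides, because `2(-z-1)+1 = -(2z+1)` and `n` is even, while the two pairs of
arguments `(z+1)/(2z+1)` and `z/(2z+1)` are swapped. What remains says `ψ(z+1) = ψ(z)`.
Since `ψ(0) = 0`, the polynomial `ψ` vanishes at every natural number, hence is zero.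
-/

open Polynomial

theorem Polynomial.eq_zero_of_eval_natCast_eq_zero {R : Type*} [CommRing R] [IsDomain R]
    [CharZero R] (p : R[X]) (h : ∀ k : ℕ, p.eval (k : R) = 0) : p = 0 :=
  p.eq_zero_of_infinite_isRoot <|
    Set.infinite_of_injective_forall_mem Nat.cast_injective h

def SatisfiesFunctionalEquation {K : Type*} [Field K] (n : ℕ) (φ : K[X]) : Prop :=
  ∀ z : K, z ≠ -1/2 → φ.eval z - φ.eval (z + 1) =
    (2 * z + 1) ^ n * (-φ.eval ((z + 1) / (2 * z + 1)) + φ.eval (z / (2 * z + 1)))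

section FunctionalEquation

variable {K : Type*} [Field K] [CharZero K] {n : ℕ} {φ : K[X]}

theorem eval_neg_sub_eval_add_one_of_functional_equation (hn : Even n)
    (heq : SatisfiesFunctionalEquation n φ) {w : K} (hw : w ≠ -1/2) :
    φ.eval (-(w + 1)) - φ.eval (w + 1) = φ.eval (-w) - φ.eval w := by
  have hw' : -(w + 1) ≠ -1/2 := fun h ↦ hw (by linear_combination -h)
  have h := heq (-(w + 1)) hw'
  rw [show 2 * -(w + 1) + 1 = -(2 * w + 1) by ring, show -(w + 1) + 1 = -w by ring,
    neg_div_neg_eq, neg_div_neg_eq, hn.neg_pow] at h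
  linear_combination heq w hw + h

theorem eval_neg_natCast_of_functional_equation (hn : Even n)
    (heq : SatisfiesFunctionalEquation n φ) (k : ℕ) : φ.eval (-(k : K)) = φ.eval (k : K) := by
  induction k with
  | zero => simp
  | succ k ih =>
    have hk : (k : K) ≠ -1/2 := by
      intro h
      have : ((2 * k : ℕ) : K) + 1 = 0 := by push_cast; linear_combination 2 * h
      exact Nat.cast_add_one_ne_zero (2 * k) this
    push_cast
    linear_combination eval_neg_sub_eval_add_one_of_functional_equation hn heq hk + ih

end FunctionalEquation

theorem even_of_functional_equation_general (n : ℕ) (hn : Even n) (φ : ℂ[X])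
    (heq : ∀ z : ℂ, z ≠ -1/2 → φ.eval z - φ.eval (z + 1) =
      (2 * z + 1) ^ n *
        (-φ.eval ((z + 1) / (2 * z + 1)) + φ.eval (z / (2 * z + 1)))) :
    ∀ z : ℂ, φ.eval (-z) = φ.eval z := by
  have hodd : φ.comp (-X) - φ = 0 :=
    eq_zero_of_eval_natCast_eq_zero _ fun k ↦ by
      simp [eval_neg_natCast_of_functional_equation hn heq k]
  intro z
  simpa [sub_eq_zero] using congrArg (eval z) hodd

/-- For `n` even, a polynomial `φ` of degree `≤ n+1` satisfying
`φ(z) − φ(z+1) = (2z+1)ⁿ(−φ((z+1)/(2z+1)) + φ(z/(2z+1)))`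
(as an identity of rational functions) is even. -/
theorem even_of_functional_equation (n : ℕ) (hn : Even n) (φ : ℂ[X])
    (hdeg : φ ∈ degreeLT ℂ (n + 2))
    (heq : ∀ z : ℂ, z ≠ -1/2 → φ.eval z - φ.eval (z + 1) =
      (2 * z + 1) ^ n *
        (-φ.eval ((z + 1) / (2 * z + 1)) + φ.eval (z / (2 * z + 1)))) :
    ∀ z : ℂ, φ.eval (-z) = φ.eval z :=
  even_of_functional_equation_general n hn φ heq
end
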